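/- arXiv:2212.01563 — 4 statements merged into one kernel-verified Lean document; each statement's English description precedes it below -/
import Mathlib

section
/- Cross-correlation and variance of IRS-assisted channel samples (Theorem 1). Assume the family (h, u, v, Φ₁, Φ₂, n₁, n₂) is mutually independent, h, n₁, n₂ and every coordinate of u and v are square-integrable with zero mean, E[|h|²] = β, E[|n₁|²] = E[|n₂|²] = σ², and E[n₁ · conj(n₂)] = 0. Then the channel samples s₁ and s₂ satisfy: (i) E[s₁ · conj(s₂)] = β + trace(R_u · (E[Φ₂])ᴴ · R_v · E[Φ₁]), where E[Φ_p] denotes the entrywise expectation of Φ_p; and (ii) for each l ∈ {1, 2}, E[|s_l|²] = β + E[trace(R_u · (Φ_l)ᴴ · R_v · Φ_l)] + σ². Consequently the correlation coefficient ρ = E[s₁ · conj(s₂)] / E[|s_l|²] equals (β + trace(R_u · (E[Φ₂])ᴴ · R_v · E[Φ₁])) / (β + E[trace(R_u · (Φ_l)ᴴ · R_v · Φ_l)] + σ²). -/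
/-!
Write `s_p = h + c_p + n_p` with the cascaded term `c_p = vᴴ Φ_p u = (vᴴ Φ_p) ⬝ u`.
In `E[s_p conj s_q]` every cross term vanishes: those involving `h` because `h` is centred and
independent of the rest, those pairing `c` with a noise because `u` is centred and independent of
`(v, Φ, n)`. In `E[c_p conj c_q]` the independent factors `u`, `v` and `(Φ_p, Φ_q)` separate,
which produces `tr (R_u Φ_qᴴ R_v Φ_p)` under the expectation; for `p ≠ q` the independence of
`Φ₁` and `Φ₂` then replaces each phase matrix by its mean. All terms are integrable because a
product of independent square-integrable variables is again square-integrable.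
-/

open MeasureTheory ProbabilityTheory Matrix Complex

/-- Borel-type measurable space on matrices, induced from the pi-type structure. -/
noncomputable instance matrixMeasurableSpace {m n α : Type*} [MeasurableSpace α] :
    MeasurableSpace (Matrix m n α) :=
  inferInstanceAs (MeasurableSpace (m → n → α))

section Independence

variable {Ω : Type*} [MeasurableSpace Ω] {μ : Measure Ω} [IsProbabilityMeasure μ]

theorem indepFun_and_map_eq_of_map_prod_eq_prod {α β : Type*} [MeasurableSpace α]
    [MeasurableSpace β] {X : Ω → α} {Y : Ω → β} {ν : Measure β} [SFinite ν]
    (hX : Measurable X) (hY : Measurable Y)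
    (h : μ.map (fun ω => (X ω, Y ω)) = (μ.map X).prod ν) : IndepFun X Y μ ∧ μ.map Y = ν := by
  have : IsProbabilityMeasure (μ.map X) := Measure.isProbabilityMeasure_map hX.aemeasurable
  have hY_map : μ.map Y = ν := by
    have := Measure.map_snd_prod (μ := μ.map X) (ν := ν)
    rwa [← h, Measure.map_map measurable_snd (hX.prodMk hY), measure_univ, one_smul] at this
  exact ⟨(indepFun_iff_map_prod_eq_prod_map_map hX.aemeasurable hY.aemeasurable).2
    (hY_map ▸ h), hY_map⟩

open MeasurableEquiv in
theorem indepFun_channel_of_map_eq_prod {α β γ δ ε : Type*} [MeasurableSpace α]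
    [MeasurableSpace β] [MeasurableSpace γ] [MeasurableSpace δ] [MeasurableSpace ε]
    {h : Ω → α} {u : Ω → β} {v : Ω → γ} {Φ : Fin 2 → Ω → δ} {n : Fin 2 → Ω → ε}
    (hhm : Measurable h) (hum : Measurable u) (hvm : Measurable v)
    (hΦm : ∀ p, Measurable (Φ p)) (hnm : ∀ p, Measurable (n p))
    (hindep : μ.map (fun ω => (h ω, u ω, v ω, Φ 0 ω, Φ 1 ω, n 0 ω, n 1 ω)) =
      (μ.map h).prod ((μ.map u).prod ((μ.map v).prod ((μ.map (Φ 0)).prod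
        ((μ.map (Φ 1)).prod ((μ.map (n 0)).prod (μ.map (n 1)))))))) :
    IndepFun h (fun ω => (u ω, v ω, fun p => Φ p ω, fun p => n p ω)) μ ∧
      IndepFun u (fun ω => (v ω, fun p => Φ p ω, fun p => n p ω)) μ ∧
      IndepFun v (fun ω p => Φ p ω) μ ∧ IndepFun (Φ 0) (Φ 1) μ := by
  obtain ⟨hh, hmap₁⟩ := indepFun_and_map_eq_of_map_prod_eq_prod hhm (by fun_prop) hindep
  obtain ⟨hu, hmap₂⟩ := indepFun_and_map_eq_of_map_prod_eq_prod hum (by fun_prop) hmap₁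
  obtain ⟨hv, hmap₃⟩ := indepFun_and_map_eq_of_map_prod_eq_prod hvm (by fun_prop) hmap₂
  obtain ⟨hΦ, -⟩ := indepFun_and_map_eq_of_map_prod_eq_prod (hΦm 0) (by fun_prop) hmap₃
  have hpackΦ (ω : Ω) : finTwoArrow.symm (Φ 0 ω, Φ 1 ω) = fun p => Φ p ω :=
    finTwoArrow.symm_apply_apply fun p => Φ p ω
  have hpackn (ω : Ω) : finTwoArrow.symm (n 0 ω, n 1 ω) = fun p => n p ω :=
    finTwoArrow.symm_apply_apply fun p => n p ω
  refine ⟨?_, ?_, ?_, hΦ.comp measurable_id measurable_fst⟩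
  · refine (hh.comp measurable_id (ψ := fun x =>
      (x.1, x.2.1, finTwoArrow.symm (x.2.2.1, x.2.2.2.1), finTwoArrow.symm x.2.2.2.2))
      (by fun_prop)).congr (ae_of_all _ fun _ => rfl) (ae_of_all _ fun ω => ?_)
    simp only [Function.comp_apply, hpackΦ, hpackn]
  · refine (hu.comp measurable_id (ψ := fun x =>
      (x.1, finTwoArrow.symm (x.2.1, x.2.2.1), finTwoArrow.symm x.2.2.2))
      (by fun_prop)).congr (ae_of_all _ fun _ => rfl) (ae_of_all _ fun ω => ?_)
    simp only [Function.comp_apply, hpackΦ, hpackn]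
  · refine (hv.comp measurable_id (ψ := fun x => finTwoArrow.symm (x.1, x.2.1))
      (by fun_prop)).congr (ae_of_all _ fun _ => rfl) (ae_of_all _ fun ω => ?_)
    simp only [Function.comp_apply, hpackΦ]

end Independence

section SquareIntegrable

variable {Ω : Type*} [MeasurableSpace Ω] {μ : Measure Ω}

theorem integral_star {f : Ω → ℂ} : ∫ ω, star (f ω) ∂μ = star (∫ ω, f ω ∂μ) :=
  integral_conj

theorem ProbabilityTheory.IndepFun.memLp_two_mul {X Y : Ω → ℂ} (hXY : IndepFun X Y μ)
    (hX : MemLp X 2 μ) (hY : MemLp Y 2 μ) : MemLp (X * Y) 2 μ := by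
  rw [memLp_two_iff_integrable_sq_norm (hX.1.mul hY.1)]
  have hsq := (hXY.comp (φ := fun x => ‖x‖ ^ 2) (ψ := fun x => ‖x‖ ^ 2) (by fun_prop)
    (by fun_prop)).integrable_mul ((memLp_two_iff_integrable_sq_norm hX.1).1 hX)
    ((memLp_two_iff_integrable_sq_norm hY.1).1 hY)
  exact hsq.congr (ae_of_all _ fun ω => by simp [mul_pow])

theorem MeasureTheory.MemLp.integrable_mul_star {X Y : Ω → ℂ} (hX : MemLp X 2 μ)
    (hY : MemLp Y 2 μ) : Integrable (fun ω => X ω * star (Y ω)) μ :=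
  hX.integrable_mul hY.star

theorem integral_add_mul_star_add {X Y X' Y' : Ω → ℂ} (hX : MemLp X 2 μ) (hY : MemLp Y 2 μ)
    (hX' : MemLp X' 2 μ) (hY' : MemLp Y' 2 μ)
    (hXY' : ∫ ω, X ω * star (Y' ω) ∂μ = 0) (hX'Y : ∫ ω, X' ω * star (Y ω) ∂μ = 0) :
    ∫ ω, (X ω + Y ω) * star (X' ω + Y' ω) ∂μ
      = ∫ ω, X ω * star (X' ω) ∂μ + ∫ ω, Y ω * star (Y' ω) ∂μ := by
  have hYX' : ∫ ω, Y ω * star (X' ω) ∂μ = 0 := by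
    simpa [← integral_star, mul_comm] using congrArg star hX'Y
  simp only [star_add, mul_add, add_mul]
  have hXX' := hX.integrable_mul_star hX'
  have hYX'_int := hY.integrable_mul_star hX'
  have hXY'_int := hX.integrable_mul_star hY'
  have hYY' := hY.integrable_mul_star hY'
  rw [integral_add, integral_add hXX' hYX'_int, integral_add hXY'_int hYY', hXY', hYX']
  · ring
  · exact hXX'.add hYX'_int
  · exact hXY'_int.add hYY'

end SquareIntegrable

section BilinearForm

variable {Ω ι : Type*} [MeasurableSpace Ω] {μ : Measure Ω} [Fintype ι]

theorem ProbabilityTheory.IndepFun.memLp_two_dotProduct {X A : Ω → ι → ℂ}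
    (hXA : IndepFun X A μ) (hX : ∀ j, MemLp (fun ω => X ω j) 2 μ)
    (hA : ∀ j, MemLp (fun ω => A ω j) 2 μ) : MemLp (fun ω => A ω ⬝ᵥ X ω) 2 μ :=
  memLp_finsetSum _ fun j _ =>
    (hXA.comp (measurable_pi_apply j) (measurable_pi_apply j)).symm.memLp_two_mul (hA j) (hX j)

theorem ProbabilityTheory.IndepFun.integral_dotProduct_mul_star_eq_zero {X A : Ω → ι → ℂ}
    {Z : Ω → ℂ} (hXAZ : IndepFun X (fun ω => (A ω, Z ω)) μ)
    (hX : ∀ j, Integrable (fun ω => X ω j) μ) (hX0 : ∀ j, ∫ ω, X ω j ∂μ = 0)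
    (hA : ∀ j, MemLp (fun ω => A ω j) 2 μ) (hZ : MemLp Z 2 μ) :
    ∫ ω, (A ω ⬝ᵥ X ω) * star (Z ω) ∂μ = 0 := by
  have hindep (j : ι) : IndepFun (fun ω => X ω j) (fun ω => A ω j * star (Z ω)) μ :=
    hXAZ.comp (measurable_pi_apply j)
      (by fun_prop : Measurable fun y : (ι → ℂ) × ℂ => y.1 j * star y.2)
  have hexpand (ω : Ω) :
      (A ω ⬝ᵥ X ω) * star (Z ω) = ∑ j, X ω j * (A ω j * star (Z ω)) := by
    simp only [dotProduct, Finset.sum_mul]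
    exact Fintype.sum_congr _ _ fun j => by ring
  have hint (j : ι) : Integrable (fun ω => X ω j * (A ω j * star (Z ω))) μ :=
    (hindep j).integrable_mul (hX j) ((hA j).integrable_mul_star hZ)
  simp only [hexpand]
  rw [integral_finsetSum _ fun j _ => hint j]
  refine Finset.sum_eq_zero fun j _ => ?_
  rw [(hindep j).integral_fun_mul_eq_mul_integral (hX j).1 ((hA j).integrable_mul_star hZ).1,
    hX0 j, zero_mul]

theorem ProbabilityTheory.IndepFun.integral_dotProduct_mul_star_dotProduct {X A B : Ω → ι → ℂ}
    (hXAB : IndepFun X (fun ω => (A ω, B ω)) μ) (hX : ∀ j, MemLp (fun ω => X ω j) 2 μ)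
    (hA : ∀ j, MemLp (fun ω => A ω j) 2 μ) (hB : ∀ j, MemLp (fun ω => B ω j) 2 μ) :
    ∫ ω, (A ω ⬝ᵥ X ω) * star (B ω ⬝ᵥ X ω) ∂μ
      = ∑ j, ∑ m, (∫ ω, X ω j * star (X ω m) ∂μ) * ∫ ω, A ω j * star (B ω m) ∂μ := by
  have hindep (j m : ι) :
      IndepFun (fun ω => X ω j * star (X ω m)) (fun ω => A ω j * star (B ω m)) μ :=
    hXAB.comp (by fun_prop : Measurable fun x : ι → ℂ => x j * star (x m))
      (by fun_prop : Measurable fun y : (ι → ℂ) × (ι → ℂ) => y.1 j * star (y.2 m))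
  have hint (j m : ι) :
      Integrable (fun ω => X ω j * star (X ω m) * (A ω j * star (B ω m))) μ :=
    (hindep j m).integrable_mul ((hX j).integrable_mul_star (hX m))
      ((hA j).integrable_mul_star (hB m))
  have hexpand (ω : Ω) : (A ω ⬝ᵥ X ω) * star (B ω ⬝ᵥ X ω)
      = ∑ j, ∑ m, X ω j * star (X ω m) * (A ω j * star (B ω m)) := by
    simp only [dotProduct, star_sum, star_mul', Finset.sum_mul_sum]
    exact Fintype.sum_congr _ _ fun j => Fintype.sum_congr _ _ fun m => by ring
  simp only [hexpand]
  rw [integral_finsetSum _ fun j _ => integrable_finsetSum _ fun m _ => hint j m]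
  refine Fintype.sum_congr _ _ fun j => ?_
  rw [integral_finsetSum _ fun m _ => hint j m]
  exact Fintype.sum_congr _ _ fun m => (hindep j m).integral_fun_mul_eq_mul_integral
    ((hX j).integrable_mul_star (hX m)).1 ((hA j).integrable_mul_star (hB m)).1

end BilinearForm

section Trace

variable {Ω ι : Type*} [MeasurableSpace Ω] {μ : Measure Ω} [Fintype ι]

theorem Matrix.trace_mul_conjTranspose_mul_mul (A B P Q : Matrix ι ι ℂ) :
    (A * Qᴴ * B * P).trace
      = ∑ j, ∑ i, ∑ k, ∑ m, A j m * B k i * (P i j * star (Q k m)) := by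
  simp only [Matrix.trace, Matrix.diag, Matrix.mul_apply, Matrix.conjTranspose_apply,
    Finset.sum_mul]
  exact Fintype.sum_congr _ _ fun j => Fintype.sum_congr _ _ fun i =>
    Fintype.sum_congr _ _ fun k => Fintype.sum_congr _ _ fun m => by ring

theorem integral_trace_mul_conjTranspose_mul_mul (A B : Matrix ι ι ℂ) {P Q : Ω → Matrix ι ι ℂ}
    (hPQ : ∀ i j k m, Integrable (fun ω => P ω i j * star (Q ω k m)) μ) :
    ∫ ω, (A * (Q ω)ᴴ * B * P ω).trace ∂μ
      = ∑ j, ∑ i, ∑ k, ∑ m, A j m * B k i * ∫ ω, P ω i j * star (Q ω k m) ∂μ := by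
  simp only [Matrix.trace_mul_conjTranspose_mul_mul]
  rw [integral_finsetSum _ fun j _ => by fun_prop]
  refine Fintype.sum_congr _ _ fun j => ?_
  rw [integral_finsetSum _ fun i _ => by fun_prop]
  refine Fintype.sum_congr _ _ fun i => ?_
  rw [integral_finsetSum _ fun k _ => by fun_prop]
  refine Fintype.sum_congr _ _ fun k => ?_
  rw [integral_finsetSum _ fun m _ => by fun_prop]
  exact Fintype.sum_congr _ _ fun m => integral_const_mul _ _

theorem ProbabilityTheory.IndepFun.integral_trace_mul_conjTranspose_mul_mul
    {P Q : Ω → Matrix ι ι ℂ} (hPQ : IndepFun P Q μ) (hPL2 : ∀ i j, MemLp (fun ω => P ω i j) 2 μ)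
    (hQL2 : ∀ i j, MemLp (fun ω => Q ω i j) 2 μ) (A B EP EQ : Matrix ι ι ℂ)
    (hEP : ∀ i j, EP i j = ∫ ω, P ω i j ∂μ) (hEQ : ∀ i j, EQ i j = ∫ ω, Q ω i j ∂μ) :
    ∫ ω, (A * (Q ω)ᴴ * B * P ω).trace ∂μ = (A * EQᴴ * B * EP).trace := by
  rw [_root_.integral_trace_mul_conjTranspose_mul_mul A B
      fun i j k m => (hPL2 i j).integrable_mul_star (hQL2 k m),
    trace_mul_conjTranspose_mul_mul]
  refine Fintype.sum_congr _ _ fun j => Fintype.sum_congr _ _ fun i =>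
    Fintype.sum_congr _ _ fun k => Fintype.sum_congr _ _ fun m => ?_
  have hind : IndepFun (fun ω => P ω i j) (fun ω => star (Q ω k m)) μ :=
    hPQ.comp (by fun_prop : Measurable fun M : Matrix ι ι ℂ => M i j)
      (by fun_prop : Measurable fun M : Matrix ι ι ℂ => star (M k m))
  rw [hind.integral_fun_mul_eq_mul_integral (hPL2 i j).1 (hQL2 k m).1.star, integral_star,
    hEP, hEQ]

end Trace

@[fun_prop]
theorem Measurable.vecMul {α R m n : Type*} [MeasurableSpace α] [MeasurableSpace R] [Fintype m]
    [NonUnitalNonAssocSemiring R] [MeasurableMul₂ R] [MeasurableAdd₂ R]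
    {f : α → m → R} {g : α → Matrix m n R} (hf : Measurable f) (hg : Measurable g) :
    Measurable fun x => f x ᵥ* g x :=
  measurable_pi_lambda _ fun j => by simp only [Matrix.vecMul, dotProduct]; fun_prop

noncomputable def secondMomentMatrix {Ω ι : Type*} [MeasurableSpace Ω] (μ : Measure Ω)
    (X : Ω → ι → ℂ) : Matrix ι ι ℂ :=
  Matrix.of fun i j => ∫ ω, X ω i * star (X ω j) ∂μ

section Cascade

variable {Ω ι : Type*} [MeasurableSpace Ω] {μ : Measure Ω} [Fintype ι]
  {u v : Ω → ι → ℂ} {P Q : Ω → Matrix ι ι ℂ}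

theorem memLp_two_star_vecMul (hv : IndepFun v P μ) (hvL2 : ∀ i, MemLp (fun ω => v ω i) 2 μ)
    (hPL2 : ∀ i j, MemLp (fun ω => P ω i j) 2 μ) (j : ι) :
    MemLp (fun ω => (star (v ω) ᵥ* P ω) j) 2 μ := by
  have hind : IndepFun (fun ω => star (v ω)) (fun ω i => P ω i j) μ :=
    hv.comp (by fun_prop) (by fun_prop : Measurable fun M : Matrix ι ι ℂ => fun i => M i j)
  simp only [vecMul, dotProduct_comm (star (v _))]
  exact hind.memLp_two_dotProduct (fun i => (hvL2 i).star) (fun i => hPL2 i j)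

theorem memLp_two_star_dotProduct_mulVec (hu : IndepFun u (fun ω => (v ω, P ω)) μ)
    (hv : IndepFun v P μ) (huL2 : ∀ i, MemLp (fun ω => u ω i) 2 μ)
    (hvL2 : ∀ i, MemLp (fun ω => v ω i) 2 μ) (hPL2 : ∀ i j, MemLp (fun ω => P ω i j) 2 μ) :
    MemLp (fun ω => star (v ω) ⬝ᵥ (P ω *ᵥ u ω)) 2 μ := by
  have hind : IndepFun u (fun ω => star (v ω) ᵥ* P ω) μ :=
    hu.comp measurable_id
      (by fun_prop : Measurable fun x : (ι → ℂ) × Matrix ι ι ℂ => star x.1 ᵥ* x.2)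
  simp only [dotProduct_mulVec]
  exact hind.memLp_two_dotProduct huL2 (memLp_two_star_vecMul hv hvL2 hPL2)

theorem integral_star_dotProduct_mulVec_mul_star_eq_zero [IsFiniteMeasure μ] {Z : Ω → ℂ}
    (hu : IndepFun u (fun ω => (v ω, P ω, Z ω)) μ) (hv : IndepFun v P μ)
    (huL2 : ∀ i, MemLp (fun ω => u ω i) 2 μ) (humean : ∀ i, ∫ ω, u ω i ∂μ = 0)
    (hvL2 : ∀ i, MemLp (fun ω => v ω i) 2 μ) (hPL2 : ∀ i j, MemLp (fun ω => P ω i j) 2 μ)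
    (hZ : MemLp Z 2 μ) :
    ∫ ω, (star (v ω) ⬝ᵥ (P ω *ᵥ u ω)) * star (Z ω) ∂μ = 0 := by
  have hind : IndepFun u (fun ω => (star (v ω) ᵥ* P ω, Z ω)) μ :=
    hu.comp measurable_id
      (by fun_prop : Measurable fun x : (ι → ℂ) × Matrix ι ι ℂ × ℂ => (star x.1 ᵥ* x.2.1, x.2.2))
  simp only [dotProduct_mulVec]
  exact hind.integral_dotProduct_mul_star_eq_zero (fun i => (huL2 i).integrable one_le_two)
    humean (memLp_two_star_vecMul hv hvL2 hPL2) hZ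

theorem integral_star_dotProduct_mulVec_mul_star
    (hu : IndepFun u (fun ω => (v ω, P ω, Q ω)) μ) (hv : IndepFun v (fun ω => (P ω, Q ω)) μ)
    (huL2 : ∀ i, MemLp (fun ω => u ω i) 2 μ) (hvL2 : ∀ i, MemLp (fun ω => v ω i) 2 μ)
    (hPL2 : ∀ i j, MemLp (fun ω => P ω i j) 2 μ) (hQL2 : ∀ i j, MemLp (fun ω => Q ω i j) 2 μ) :
    ∫ ω, (star (v ω) ⬝ᵥ (P ω *ᵥ u ω)) * star (star (v ω) ⬝ᵥ (Q ω *ᵥ u ω)) ∂μ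
      = ∫ ω, (secondMomentMatrix μ u * (Q ω)ᴴ * secondMomentMatrix μ v * P ω).trace ∂μ := by
  have hvP : IndepFun v P μ := hv.comp measurable_id measurable_fst
  have hvQ : IndepFun v Q μ := hv.comp measurable_id measurable_snd
  have hW (j m : ι) : ∫ ω, (star (v ω) ᵥ* P ω) j * star ((star (v ω) ᵥ* Q ω) m) ∂μ
      = ∑ i, ∑ k, (∫ ω, v ω k * star (v ω i) ∂μ) * ∫ ω, P ω i j * star (Q ω k m) ∂μ := by
    have hind : IndepFun (fun ω => star (v ω)) (fun ω => (fun i => P ω i j, fun k => Q ω k m)) μ :=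
      hv.comp (by fun_prop) (by fun_prop : Measurable fun y : Matrix ι ι ℂ × Matrix ι ι ℂ =>
        (fun i => y.1 i j, fun k => y.2 k m))
    simp only [vecMul, dotProduct_comm (star (v _))]
    rw [hind.integral_dotProduct_mul_star_dotProduct (fun i => (hvL2 i).star) (fun i => hPL2 i j)
      (fun k => hQL2 k m)]
    simp only [Pi.star_apply, star_star, mul_comm (star (v _ _))]
  have hind : IndepFun u (fun ω => (star (v ω) ᵥ* P ω, star (v ω) ᵥ* Q ω)) μ :=
    hu.comp measurable_id (by fun_prop : Measurable
      fun x : (ι → ℂ) × Matrix ι ι ℂ × Matrix ι ι ℂ => (star x.1 ᵥ* x.2.1, star x.1 ᵥ* x.2.2))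
  simp only [dotProduct_mulVec]
  rw [hind.integral_dotProduct_mul_star_dotProduct huL2
      (memLp_two_star_vecMul hvP hvL2 hPL2) (memLp_two_star_vecMul hvQ hvL2 hQL2),
    integral_trace_mul_conjTranspose_mul_mul _ _
      fun i j k m => (hPL2 i j).integrable_mul_star (hQL2 k m)]
  simp only [hW, secondMomentMatrix, of_apply, Finset.mul_sum, ← mul_assoc]
  refine Fintype.sum_congr _ _ fun j => ?_
  rw [Finset.sum_comm]
  exact Fintype.sum_congr _ _ fun i => Finset.sum_comm

end Cascade

theorem integral_channelSample_mul_star {Ω ι κ : Type*} [MeasurableSpace Ω] {μ : Measure Ω}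
    [IsFiniteMeasure μ] [Fintype ι] {h : Ω → ℂ} {u v : Ω → ι → ℂ}
    {Φ : κ → Ω → Matrix ι ι ℂ} {n : κ → Ω → ℂ}
    (hh : IndepFun h (fun ω => (u ω, v ω, fun p => Φ p ω, fun p => n p ω)) μ)
    (hu : IndepFun u (fun ω => (v ω, fun p => Φ p ω, fun p => n p ω)) μ)
    (hv : IndepFun v (fun ω p => Φ p ω) μ)
    (hhL2 : MemLp h 2 μ) (huL2 : ∀ i, MemLp (fun ω => u ω i) 2 μ)
    (hvL2 : ∀ i, MemLp (fun ω => v ω i) 2 μ) (hΦL2 : ∀ p i j, MemLp (fun ω => Φ p ω i j) 2 μ)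
    (hnL2 : ∀ p, MemLp (n p) 2 μ) (hhmean : ∫ ω, h ω ∂μ = 0)
    (humean : ∀ i, ∫ ω, u ω i ∂μ = 0) (p q : κ) :
    ∫ ω, (h ω + star (v ω) ⬝ᵥ (Φ p ω *ᵥ u ω) + n p ω)
        * star (h ω + star (v ω) ⬝ᵥ (Φ q ω *ᵥ u ω) + n q ω) ∂μ
      = ∫ ω, h ω * star (h ω) ∂μ
        + ∫ ω, (secondMomentMatrix μ u * (Φ q ω)ᴴ * secondMomentMatrix μ v * Φ p ω).trace ∂μ
        + ∫ ω, n p ω * star (n q ω) ∂μ := by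
  set c : κ → Ω → ℂ := fun r ω => star (v ω) ⬝ᵥ (Φ r ω *ᵥ u ω)
  have hvΦ (r : κ) : IndepFun v (Φ r) μ := hv.comp measurable_id (measurable_pi_apply r)
  have huΦ (r : κ) : IndepFun u (fun ω => (v ω, Φ r ω)) μ :=
    hu.comp measurable_id (by fun_prop : Measurable
      fun x : (ι → ℂ) × (κ → Matrix ι ι ℂ) × (κ → ℂ) => (x.1, x.2.1 r))
  have hcL2 (r : κ) : MemLp (c r) 2 μ :=
    memLp_two_star_dotProduct_mulVec (huΦ r) (hvΦ r) huL2 hvL2 (hΦL2 r)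
  have hgL2 (r : κ) : MemLp (fun ω => c r ω + n r ω) 2 μ := (hcL2 r).add (hnL2 r)
  have hh_cross (r : κ) : ∫ ω, h ω * star (c r ω + n r ω) ∂μ = 0 := by
    have hind : IndepFun h (fun ω => star (c r ω + n r ω)) μ :=
      hh.comp measurable_id (by simp only [dotProduct, mulVec, Pi.star_apply]; fun_prop :
        Measurable fun x : (ι → ℂ) × (ι → ℂ) × (κ → Matrix ι ι ℂ) × (κ → ℂ) =>
          star (star x.2.1 ⬝ᵥ (x.2.2.1 r *ᵥ x.1) + x.2.2.2 r))
    rw [hind.integral_fun_mul_eq_mul_integral hhL2.1 (hgL2 r).1.star, hhmean, zero_mul]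
  have hc_cross (r s : κ) : ∫ ω, c r ω * star (n s ω) ∂μ = 0 := by
    have hind : IndepFun u (fun ω => (v ω, Φ r ω, n s ω)) μ :=
      hu.comp measurable_id (by fun_prop : Measurable
        fun x : (ι → ℂ) × (κ → Matrix ι ι ℂ) × (κ → ℂ) => (x.1, x.2.1 r, x.2.2 s))
    exact integral_star_dotProduct_mulVec_mul_star_eq_zero hind (hvΦ r) huL2 humean hvL2 (hΦL2 r)
      (hnL2 s)
  have hc_c : ∫ ω, c p ω * star (c q ω) ∂μ
      = ∫ ω, (secondMomentMatrix μ u * (Φ q ω)ᴴ * secondMomentMatrix μ v * Φ p ω).trace ∂μ := by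
    have hu' : IndepFun u (fun ω => (v ω, Φ p ω, Φ q ω)) μ :=
      hu.comp measurable_id (by fun_prop : Measurable
        fun x : (ι → ℂ) × (κ → Matrix ι ι ℂ) × (κ → ℂ) => (x.1, x.2.1 p, x.2.1 q))
    have hv' : IndepFun v (fun ω => (Φ p ω, Φ q ω)) μ :=
      hv.comp measurable_id (by fun_prop : Measurable fun x : κ → Matrix ι ι ℂ => (x p, x q))
    exact integral_star_dotProduct_mulVec_mul_star hu' hv' huL2 hvL2 (hΦL2 p) (hΦL2 q)
  calc _ = ∫ ω, (h ω + (c p ω + n p ω)) * star (h ω + (c q ω + n q ω)) ∂μ := by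
        simp only [c, add_assoc]
    _ = _ := by
      rw [integral_add_mul_star_add hhL2 (hgL2 p) hhL2 (hgL2 q) (hh_cross q) (hh_cross p),
        integral_add_mul_star_add (hcL2 p) (hnL2 p) (hcL2 q) (hnL2 q) (hc_cross p q)
          (hc_cross q p), hc_c, add_assoc]

theorem crossCorrelation_variance_IRS_samples_general
    {Ω : Type*} [MeasurableSpace Ω] (μ : Measure Ω) [IsProbabilityMeasure μ]
    {N : ℕ}
    (h : Ω → ℂ) (u v : Ω → Fin N → ℂ)
    (Φ : Fin 2 → Ω → Matrix (Fin N) (Fin N) ℂ)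
    (n : Fin 2 → Ω → ℂ)
    (s : Fin 2 → Ω → ℂ)
    (hs : ∀ p ω, s p ω = h ω + star (v ω) ⬝ᵥ ((Φ p ω).mulVec (u ω)) + n p ω)
    -- measurability
    (hhm : Measurable h) (hum : Measurable u) (hvm : Measurable v)
    (hΦm : ∀ p, Measurable (Φ p)) (hnm : ∀ p, Measurable (n p))
    -- each `Φ p ω` is diagonal with unit-modulus diagonal entries
    (hΦdiag : ∀ p ω, ∀ i j : Fin N, i ≠ j → Φ p ω i j = 0)
    (hΦunit : ∀ p ω, ∀ i : Fin N, ‖Φ p ω i i‖ = 1)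
    -- square integrability
    (hhL2 : MemLp h 2 μ) (hnL2 : ∀ p, MemLp (n p) 2 μ)
    (huL2 : ∀ i, MemLp (fun ω => u ω i) 2 μ)
    (hvL2 : ∀ i, MemLp (fun ω => v ω i) 2 μ)
    -- zero means
    (hhmean : ∫ ω, h ω ∂μ = 0)
    (humean : ∀ i, ∫ ω, u ω i ∂μ = 0)
    -- second moments of the direct channel and of the noises
    (β σ2 : ℝ)
    (hβ : ∫ ω, h ω * star (h ω) ∂μ = (β : ℂ))
    (hσ : ∀ p, ∫ ω, n p ω * star (n p ω) ∂μ = (σ2 : ℂ))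
    (hnuncorr : ∫ ω, n 0 ω * star (n 1 ω) ∂μ = 0)
    -- covariance matrices of the IRS channel vectors
    (Ru Rv : Matrix (Fin N) (Fin N) ℂ)
    (hRu : ∀ i j, Ru i j = ∫ ω, u ω i * star (u ω j) ∂μ)
    (hRv : ∀ i j, Rv i j = ∫ ω, v ω i * star (v ω j) ∂μ)
    -- entrywise expectations of the phase-shift matrices
    (EΦ : Fin 2 → Matrix (Fin N) (Fin N) ℂ)
    (hEΦ : ∀ p i j, EΦ p i j = ∫ ω, Φ p ω i j ∂μ)
    -- mutual independence of the family (h, u, v, Φ₁, Φ₂, n₁, n₂):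
    -- the joint law is the product of the individual laws
    (hindep :
      μ.map (fun ω => (h ω, u ω, v ω, Φ 0 ω, Φ 1 ω, n 0 ω, n 1 ω)) =
        (μ.map h).prod ((μ.map u).prod ((μ.map v).prod ((μ.map (Φ 0)).prod
          ((μ.map (Φ 1)).prod ((μ.map (n 0)).prod (μ.map (n 1)))))))) :
    -- (i) cross-correlation
    (∫ ω, s 0 ω * star (s 1 ω) ∂μ
        = (β : ℂ) + (Ru * (EΦ 1)ᴴ * Rv * EΦ 0).trace) ∧
    -- (ii) variance of each sample
    (∀ l : Fin 2, ∫ ω, s l ω * star (s l ω) ∂μ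
        = (β : ℂ) + (∫ ω, (Ru * (Φ l ω)ᴴ * Rv * Φ l ω).trace ∂μ) + (σ2 : ℂ)) ∧
    -- consequence: the correlation coefficient
    (∀ l : Fin 2,
      (∫ ω, s 0 ω * star (s 1 ω) ∂μ) / (∫ ω, s l ω * star (s l ω) ∂μ)
        = ((β : ℂ) + (Ru * (EΦ 1)ᴴ * Rv * EΦ 0).trace)
          / ((β : ℂ) + (∫ ω, (Ru * (Φ l ω)ᴴ * Rv * Φ l ω).trace ∂μ) + (σ2 : ℂ))) := by
  obtain ⟨hh, hu, hv, hΦ⟩ := indepFun_channel_of_map_eq_prod hhm hum hvm hΦm hnm hindep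
  have hΦL2 (p : Fin 2) (i j : Fin N) : MemLp (fun ω => Φ p ω i j) 2 μ := by
    refine MemLp.of_bound (by fun_prop) 1 (ae_of_all _ fun ω => ?_)
    rcases eq_or_ne i j with rfl | hij
    · exact (hΦunit p ω i).le
    · simp [hΦdiag p ω i j hij]
  have hRu' : secondMomentMatrix μ u = Ru := Matrix.ext fun i j => (hRu i j).symm
  have hRv' : secondMomentMatrix μ v = Rv := Matrix.ext fun i j => (hRv i j).symm
  have hmoment (p q : Fin 2) : ∫ ω, s p ω * star (s q ω) ∂μ
      = β + ∫ ω, (Ru * (Φ q ω)ᴴ * Rv * Φ p ω).trace ∂μ + ∫ ω, n p ω * star (n q ω) ∂μ := by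
    simp only [hs]
    rw [integral_channelSample_mul_star hh hu hv hhL2 huL2 hvL2 hΦL2 hnL2 hhmean humean, hβ,
      hRu', hRv']
  have hcross : ∫ ω, s 0 ω * star (s 1 ω) ∂μ = β + (Ru * (EΦ 1)ᴴ * Rv * EΦ 0).trace := by
    rw [hmoment, hnuncorr, add_zero,
      hΦ.integral_trace_mul_conjTranspose_mul_mul (hΦL2 0) (hΦL2 1) _ _ _ _ (hEΦ 0) (hEΦ 1)]
  have hvariance (l : Fin 2) : ∫ ω, s l ω * star (s l ω) ∂μ
      = β + ∫ ω, (Ru * (Φ l ω)ᴴ * Rv * Φ l ω).trace ∂μ + σ2 := by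
    rw [hmoment, hσ]
  exact ⟨hcross, hvariance, fun l => by rw [hcross, hvariance]⟩

/-- **Theorem 1** (cross-correlation and variance of IRS-assisted channel samples,
direct path present).  The channel samples are
`s p ω = h ω + (v ω)ᴴ ⬝ (Φ p ω) ⬝ (u ω) + n p ω`. -/
theorem crossCorrelation_variance_IRS_samples
    {Ω : Type*} [MeasurableSpace Ω] (μ : Measure Ω) [IsProbabilityMeasure μ]
    {N : ℕ} (hN : 1 ≤ N)
    (h : Ω → ℂ) (u v : Ω → Fin N → ℂ)
    (Φ : Fin 2 → Ω → Matrix (Fin N) (Fin N) ℂ)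
    (n : Fin 2 → Ω → ℂ)
    (s : Fin 2 → Ω → ℂ)
    (hs : ∀ p ω, s p ω = h ω + star (v ω) ⬝ᵥ ((Φ p ω).mulVec (u ω)) + n p ω)
    -- measurability
    (hhm : Measurable h) (hum : Measurable u) (hvm : Measurable v)
    (hΦm : ∀ p, Measurable (Φ p)) (hnm : ∀ p, Measurable (n p))
    -- each `Φ p ω` is diagonal with unit-modulus diagonal entries
    (hΦdiag : ∀ p ω, ∀ i j : Fin N, i ≠ j → Φ p ω i j = 0)
    (hΦunit : ∀ p ω, ∀ i : Fin N, ‖Φ p ω i i‖ = 1)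
    -- square integrability
    (hhL2 : MemLp h 2 μ) (hnL2 : ∀ p, MemLp (n p) 2 μ)
    (huL2 : ∀ i, MemLp (fun ω => u ω i) 2 μ)
    (hvL2 : ∀ i, MemLp (fun ω => v ω i) 2 μ)
    -- zero means
    (hhmean : ∫ ω, h ω ∂μ = 0)
    (hnmean : ∀ p, ∫ ω, n p ω ∂μ = 0)
    (humean : ∀ i, ∫ ω, u ω i ∂μ = 0)
    (hvmean : ∀ i, ∫ ω, v ω i ∂μ = 0)
    -- second moments of the direct channel and of the noises
    (β σ2 : ℝ)
    (hβ : ∫ ω, h ω * star (h ω) ∂μ = (β : ℂ))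
    (hσ : ∀ p, ∫ ω, n p ω * star (n p ω) ∂μ = (σ2 : ℂ))
    (hnuncorr : ∫ ω, n 0 ω * star (n 1 ω) ∂μ = 0)
    -- covariance matrices of the IRS channel vectors
    (Ru Rv : Matrix (Fin N) (Fin N) ℂ)
    (hRu : ∀ i j, Ru i j = ∫ ω, u ω i * star (u ω j) ∂μ)
    (hRv : ∀ i j, Rv i j = ∫ ω, v ω i * star (v ω j) ∂μ)
    -- entrywise expectations of the phase-shift matrices
    (EΦ : Fin 2 → Matrix (Fin N) (Fin N) ℂ)
    (hEΦ : ∀ p i j, EΦ p i j = ∫ ω, Φ p ω i j ∂μ)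
    -- mutual independence of the family (h, u, v, Φ₁, Φ₂, n₁, n₂):
    -- the joint law is the product of the individual laws
    (hindep :
      μ.map (fun ω => (h ω, u ω, v ω, Φ 0 ω, Φ 1 ω, n 0 ω, n 1 ω)) =
        (μ.map h).prod ((μ.map u).prod ((μ.map v).prod ((μ.map (Φ 0)).prod
          ((μ.map (Φ 1)).prod ((μ.map (n 0)).prod (μ.map (n 1)))))))) :
    -- (i) cross-correlation
    (∫ ω, s 0 ω * star (s 1 ω) ∂μ
        = (β : ℂ) + (Ru * (EΦ 1)ᴴ * Rv * EΦ 0).trace) ∧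
    -- (ii) variance of each sample
    (∀ l : Fin 2, ∫ ω, s l ω * star (s l ω) ∂μ
        = (β : ℂ) + (∫ ω, (Ru * (Φ l ω)ᴴ * Rv * Φ l ω).trace ∂μ) + (σ2 : ℂ)) ∧
    -- consequence: the correlation coefficient
    (∀ l : Fin 2,
      (∫ ω, s 0 ω * star (s 1 ω) ∂μ) / (∫ ω, s l ω * star (s l ω) ∂μ)
        = ((β : ℂ) + (Ru * (EΦ 1)ᴴ * Rv * EΦ 0).trace)
          / ((β : ℂ) + (∫ ω, (Ru * (Φ l ω)ᴴ * Rv * Φ l ω).trace ∂μ) + (σ2 : ℂ))) :=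
  crossCorrelation_variance_IRS_samples_general μ h u v Φ n s hs hhm hum hvm hΦm hnm hΦdiag hΦunit
    hhL2 hnL2 huL2 hvL2 hhmean humean β σ2 hβ hσ hnuncorr Ru Rv hRu hRv EΦ hEΦ hindep
end

section
/- Correlation of consecutive probings under equal phase shifts, direct path present (Lemma 2). Suppose Φ_p(ω) = exp(I · φ_p(ω)) · (identity matrix) for p ∈ {1,2}, where φ₁, φ₂ are independent real random variables, each uniform on (−π, π), independent of (h, u, v, n₁, n₂). Assume the family (h, u, v, n₁, n₂) is mutually independent, all (entrywise) zero-mean and square-integrable, E[|h|²] = β, E[|n₁|²] = E[|n₂|²] = σ², E[n₁ · conj(n₂)] = 0. Then E[s₁ · conj(s₂)] = β and E[|s_l|²] = β + trace(R_v · R_u) + σ² for l ∈ {1,2}; hence the correlation coefficient ρ = E[s₁ · conj(s₂)] / E[|s_l|²] equals β / (β + trace(R_v · R_u) + σ²). -/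
/-!
Write `s p = (h + n p) + e p * g` with the phase factor `e p = exp (I * φ p)` and the cascaded
IRS channel `g = vᴴ u`. The phases have mean zero and are independent of `(h, u, v, n₁, n₂)`, so
every cross term between `h + n p` and `e p * g` averages out, and
`E[s p * conj (s q)] = E[(h + n p) * conj (h + n q)] + E[e p * conj (e q)] * E[|g|²]`.
Since `h` is centred and independent of the noise, the first term is `β + E[n p * conj (n q)]`;
independence of `u` and `v` gives `E[|g|²] = tr (R_v R_u)`; and `E[e p * conj (e q)]` is `1` for
`p = q` and `E[e 0] * conj (E[e 1]) = 0` otherwise.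
-/

open MeasureTheory ProbabilityTheory Matrix Complex Real

noncomputable def secondMoment {Ω ι 𝕜 : Type*} [MeasurableSpace Ω] [RCLike 𝕜] (μ : Measure Ω)
    (u : Ω → ι → 𝕜) : Matrix ι ι 𝕜 :=
  Matrix.of fun i j => ∫ ω, u ω i * star (u ω j) ∂μ

section Independence

variable {Ω α β : Type*} {mΩ : MeasurableSpace Ω} [MeasurableSpace α] [MeasurableSpace β]
  {μ : Measure Ω}

lemma map_eq_of_map_prod_eq_prod [IsProbabilityMeasure μ] {X : Ω → α} {Y : Ω → β}
    {ν : Measure β} [SFinite ν] (hX : Measurable X) (hY : Measurable Y)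
    (hXY : μ.map (fun ω => (X ω, Y ω)) = (μ.map X).prod ν) : μ.map Y = ν := by
  have : IsProbabilityMeasure (μ.map X) := Measure.isProbabilityMeasure_map hX.aemeasurable
  calc μ.map Y = (μ.map fun ω => (X ω, Y ω)).map Prod.snd :=
        (Measure.map_map measurable_snd (hX.prodMk hY)).symm
    _ = ν := by rw [hXY, Measure.map_snd_prod, measure_univ, one_smul]

lemma indepFun_of_map_prod_eq_prod [IsProbabilityMeasure μ] {X : Ω → α} {Y : Ω → β}
    {ν : Measure β} [SFinite ν] (hX : Measurable X) (hY : Measurable Y)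
    (hXY : μ.map (fun ω => (X ω, Y ω)) = (μ.map X).prod ν) : IndepFun X Y μ := by
  rwa [indepFun_iff_map_prod_eq_prod_map_map hX.aemeasurable hY.aemeasurable,
    map_eq_of_map_prod_eq_prod hX hY hXY]

variable {𝕜 : Type*} [RCLike 𝕜]

lemma integral_mul_eq_mul_integral_of_indep {m₁ m₂ : MeasurableSpace Ω}
    (hm₁ : m₁ ≤ mΩ) (hm₂ : m₂ ≤ mΩ) (hind : Indep m₁ m₂ μ) {f g : Ω → 𝕜}
    (hf : Measurable[m₁] f) (hg : Measurable[m₂] g) :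
    ∫ ω, f ω * g ω ∂μ = (∫ ω, f ω ∂μ) * ∫ ω, g ω ∂μ :=
  ((IndepFun_iff_Indep f g μ).2 (indep_of_indep_of_le_right
    (indep_of_indep_of_le_left hind hf.comap_le) hg.comap_le)).integral_fun_mul_eq_mul_integral
    (hf.mono hm₁ le_rfl).aestronglyMeasurable (hg.mono hm₂ le_rfl).aestronglyMeasurable

lemma ProbabilityTheory.IndepFun.memLp_two_mul_s2 {f g : Ω → 𝕜} (hfg : IndepFun f g μ)
    (hf : MemLp f 2 μ) (hg : MemLp g 2 μ) : MemLp (f * g) 2 μ := by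
  have hsq : Measurable fun z : 𝕜 => ‖z‖ ^ 2 := by fun_prop
  rw [memLp_two_iff_integrable_sq_norm (hf.1.mul hg.1)]
  simp only [Pi.mul_apply, norm_mul, mul_pow]
  exact (hfg.comp hsq hsq).integrable_mul ((memLp_two_iff_integrable_sq_norm hf.1).1 hf)
    ((memLp_two_iff_integrable_sq_norm hg.1).1 hg)

end Independence

section SecondMoments

variable {Ω : Type*} {mΩ : MeasurableSpace Ω} {μ : Measure Ω} {𝕜 : Type*} [RCLike 𝕜]

lemma integral_star_eq_zero {f : Ω → 𝕜} (hf : ∫ ω, f ω ∂μ = 0) : ∫ ω, star (f ω) ∂μ = 0 := by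
  simpa [hf] using integral_conj (μ := μ) (f := f)

lemma integral_mul_star_self_eq_one [IsProbabilityMeasure μ] {f : Ω → 𝕜}
    (hf : ∀ ω, ‖f ω‖ = 1) : ∫ ω, f ω * star (f ω) ∂μ = 1 := by
  simp [RCLike.star_def, RCLike.mul_conj, hf]

lemma ProbabilityTheory.IndepFun.integral_mul_star_eq_zero {x y : Ω → 𝕜} (hxy : IndepFun x y μ)
    (hx : AEMeasurable x μ) (hy : AEMeasurable y μ) (hx_mean : ∫ ω, x ω ∂μ = 0) :
    ∫ ω, x ω * star (y ω) ∂μ = 0 :=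
  (hxy.integral_fun_comp_mul_comp hx hy (f := fun z => z) continuous_id.aestronglyMeasurable
    continuous_star.aestronglyMeasurable).trans (mul_eq_zero_of_left hx_mean _)

lemma integral_add_mul_star_add_of_indepFun {x y y' : Ω → 𝕜} (hxy : IndepFun x y μ)
    (hxy' : IndepFun x y' μ) (hx_mean : ∫ ω, x ω ∂μ = 0)
    (hx : MemLp x 2 μ) (hy : MemLp y 2 μ) (hy' : MemLp y' 2 μ) :
    ∫ ω, (x ω + y ω) * star (x ω + y' ω) ∂μ
      = ∫ ω, x ω * star (x ω) ∂μ + ∫ ω, y ω * star (y' ω) ∂μ := by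
  have hxy'_zero := hxy'.integral_mul_star_eq_zero hx.1.aemeasurable hy'.1.aemeasurable hx_mean
  have hyx_zero : ∫ ω, y ω * star (x ω) ∂μ = 0 := by
    simpa [mul_comm] using integral_star_eq_zero
      (hxy.integral_mul_star_eq_zero hx.1.aemeasurable hy.1.aemeasurable hx_mean)
  have hint {f g : Ω → 𝕜} (hf : MemLp f 2 μ) (hg : MemLp g 2 μ) :
      Integrable (fun ω => f ω * star (g ω)) μ :=
    hf.integrable_mul hg.star
  have hexpand : ∀ ω, (x ω + y ω) * star (x ω + y' ω)
      = x ω * star (x ω) + x ω * star (y' ω) + y ω * star (x ω) + y ω * star (y' ω) :=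
    fun ω => by simp only [star_add]; ring
  simp_rw [hexpand]
  rw [integral_add ?_ (hint hy hy'), integral_add ?_ (hint hy hx),
    integral_add (hint hx hx) (hint hx hy'), hxy'_zero, hyx_zero, add_zero, add_zero]
  exacts [(hint hx hx).add (hint hx hy'), ((hint hx hx).add (hint hx hy')).add (hint hy hx)]

lemma integral_add_mul_mul_star_add_mul {m₁ m₂ : MeasurableSpace Ω}
    (hm₁ : m₁ ≤ mΩ) (hm₂ : m₂ ≤ mΩ) (hind : Indep m₁ m₂ μ)
    {e e' a a' b : Ω → 𝕜} (he : Measurable[m₁] e) (he' : Measurable[m₁] e')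
    (he_norm : ∀ ω, ‖e ω‖ ≤ 1) (he'_norm : ∀ ω, ‖e' ω‖ ≤ 1)
    (he_mean : ∫ ω, e ω ∂μ = 0) (he'_mean : ∫ ω, e' ω ∂μ = 0)
    (ha : Measurable[m₂] a) (ha' : Measurable[m₂] a') (hb : Measurable[m₂] b)
    (ha₂ : MemLp a 2 μ) (ha'₂ : MemLp a' 2 μ) (hb₂ : MemLp b 2 μ) :
    ∫ ω, (a ω + e ω * b ω) * star (a' ω + e' ω * b ω) ∂μ
      = ∫ ω, a ω * star (a' ω) ∂μ + (∫ ω, e ω * star (e' ω) ∂μ) * ∫ ω, b ω * star (b ω) ∂μ := by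
  have hstar : Measurable (star : 𝕜 → 𝕜) := continuous_star.measurable
  have hbdd {f g : Ω → 𝕜} (hf : Measurable[m₁] f) (hf_norm : ∀ ω, ‖f ω‖ ≤ 1)
      (hg : Integrable g μ) : Integrable (fun ω => f ω * g ω) μ :=
    hg.bdd_mul (hf.mono hm₁ le_rfl).aestronglyMeasurable (.of_forall hf_norm)
  have i₁ : Integrable (fun ω => a ω * star (a' ω)) μ := ha₂.integrable_mul ha'₂.star
  have i₂ : Integrable (fun ω => e ω * (b ω * star (a' ω))) μ :=
    hbdd he he_norm (hb₂.integrable_mul ha'₂.star)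
  have i₃ : Integrable (fun ω => star (e' ω) * (a ω * star (b ω))) μ :=
    hbdd (hstar.comp he') (fun ω => (norm_star _).trans_le (he'_norm ω))
      (ha₂.integrable_mul hb₂.star)
  have i₄ : Integrable (fun ω => e ω * star (e' ω) * (b ω * star (b ω))) μ :=
    hbdd (he.mul (hstar.comp he')) (fun ω => (norm_mul_le _ _).trans
      (mul_le_one₀ (he_norm ω) (norm_nonneg _) ((norm_star _).trans_le (he'_norm ω))))
      (hb₂.integrable_mul hb₂.star)
  have hexpand : ∀ ω, (a ω + e ω * b ω) * star (a' ω + e' ω * b ω)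
      = a ω * star (a' ω) + e ω * (b ω * star (a' ω)) + star (e' ω) * (a ω * star (b ω))
        + e ω * star (e' ω) * (b ω * star (b ω)) := fun ω => by
    simp only [star_add, star_mul']; ring
  have h₂ : ∫ ω, e ω * (b ω * star (a' ω)) ∂μ = 0 :=
    (integral_mul_eq_mul_integral_of_indep hm₁ hm₂ hind he (hb.mul (hstar.comp ha'))).trans
      (mul_eq_zero_of_left he_mean _)
  have h₃ : ∫ ω, star (e' ω) * (a ω * star (b ω)) ∂μ = 0 :=
    (integral_mul_eq_mul_integral_of_indep hm₁ hm₂ hind (hstar.comp he')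
      (ha.mul (hstar.comp hb))).trans (mul_eq_zero_of_left (integral_star_eq_zero he'_mean) _)
  have h₄ : ∫ ω, e ω * star (e' ω) * (b ω * star (b ω)) ∂μ
      = (∫ ω, e ω * star (e' ω) ∂μ) * ∫ ω, b ω * star (b ω) ∂μ :=
    integral_mul_eq_mul_integral_of_indep hm₁ hm₂ hind (he.mul (hstar.comp he'))
      (hb.mul (hstar.comp hb))
  simp_rw [hexpand]
  rw [integral_add ?_ i₄, integral_add ?_ i₃, integral_add i₁ i₂, h₂, h₃, h₄, add_zero, add_zero]
  exacts [i₁.add i₂, (i₁.add i₂).add i₃]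

variable {ι : Type*} [Fintype ι] {u v : Ω → ι → 𝕜}

lemma ProbabilityTheory.IndepFun.memLp_two_star_dotProduct (huv : IndepFun u v μ)
    (hu : ∀ i, MemLp (fun ω => u ω i) 2 μ) (hv : ∀ i, MemLp (fun ω => v ω i) 2 μ) :
    MemLp (fun ω => star (v ω) ⬝ᵥ u ω) 2 μ :=
  memLp_finsetSum _ fun i _ => IndepFun.memLp_two_mul_s2
    (huv.symm.comp (continuous_star.measurable.comp (measurable_pi_apply i))
      (measurable_pi_apply i)) (hv i).star (hu i)

lemma ProbabilityTheory.IndepFun.integral_star_dotProduct_mul_star (huv : IndepFun u v μ)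
    (hu : ∀ i, MemLp (fun ω => u ω i) 2 μ) (hv : ∀ i, MemLp (fun ω => v ω i) 2 μ) :
    ∫ ω, (star (v ω) ⬝ᵥ u ω) * star (star (v ω) ⬝ᵥ u ω) ∂μ
      = (secondMoment μ v * secondMoment μ u).trace := by
  have hcoord (i j : ι) : Measurable fun x : ι → 𝕜 => x i * star (x j) := by fun_prop
  have hint (w : Ω → ι → 𝕜) (hw : ∀ i, MemLp (fun ω => w ω i) 2 μ) (i j : ι) :
      Integrable (fun ω => w ω i * star (w ω j)) μ :=
    (hw i).integrable_mul (hw j).star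
  have hterm (i j : ι) : Integrable (fun ω => u ω i * star (u ω j) * (v ω j * star (v ω i))) μ :=
    (huv.comp (hcoord i j) (hcoord j i)).integrable_mul (hint u hu i j) (hint v hv j i)
  have hexpand : ∀ ω, (star (v ω) ⬝ᵥ u ω) * star (star (v ω) ⬝ᵥ u ω)
      = ∑ i, ∑ j, u ω i * star (u ω j) * (v ω j * star (v ω i)) := fun ω => by
    simp only [dotProduct, Pi.star_apply, star_sum, star_mul', star_star, Finset.sum_mul_sum]
    exact Finset.sum_congr rfl fun i _ => Finset.sum_congr rfl fun j _ => by ring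
  have hfactor (i j : ι) : ∫ ω, u ω i * star (u ω j) * (v ω j * star (v ω i)) ∂μ
      = secondMoment μ u i j * secondMoment μ v j i :=
    huv.integral_fun_comp_mul_comp (aemeasurable_pi_lambda _ fun i => (hu i).1.aemeasurable)
      (aemeasurable_pi_lambda _ fun i => (hv i).1.aemeasurable)
      (hcoord i j).aestronglyMeasurable (hcoord j i).aestronglyMeasurable
  simp_rw [hexpand]
  rw [integral_finsetSum _ fun i _ => integrable_finsetSum _ fun j _ => hterm i j]
  simp_rw [integral_finsetSum _ fun j _ => hterm _ j, hfactor, Matrix.trace, Matrix.diag,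
    Matrix.mul_apply]
  rw [Finset.sum_comm]
  exact Finset.sum_congr rfl fun _ _ => Finset.sum_congr rfl fun _ _ => mul_comm _ _

end SecondMoments

section UniformPhase

variable {Ω : Type*} {mΩ : MeasurableSpace Ω} {μ : Measure Ω}

lemma integral_exp_I_mul_Ioo_neg_pi_pi : ∫ x in Set.Ioo (-π) π, exp (I * x) = 0 := by
  rw [← integral_Ioc_eq_integral_Ioo, ← intervalIntegral.integral_of_le (by linarith [pi_pos]),
    integral_exp_mul_complex I_ne_zero]
  simp [mul_comm I, exp_pi_mul_I]

lemma integral_exp_I_mul_of_map_eq_uniform {φ : Ω → ℝ} (hφ : Measurable φ) {c : ENNReal}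
    (hmap : μ.map φ = c • volume.restrict (Set.Ioo (-π) π)) :
    ∫ ω, exp (I * φ ω) ∂μ = 0 := by
  rw [← integral_map (f := fun x : ℝ => exp (I * x)) hφ.aemeasurable (by fun_prop), hmap,
    integral_smul_measure, integral_exp_I_mul_Ioo_neg_pi_pi, smul_zero]

end UniformPhase

lemma indepFun_of_map_eq_prod_prod {Ω A U V E : Type*} [MeasurableSpace Ω] [MeasurableSpace A]
    [MeasurableSpace U] [MeasurableSpace V] [MeasurableSpace E] {μ : Measure Ω}
    [IsProbabilityMeasure μ] {h : Ω → A} {u : Ω → U} {v : Ω → V} {n : Fin 2 → Ω → E}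
    (hhm : Measurable h) (hum : Measurable u) (hvm : Measurable v) (hnm : ∀ p, Measurable (n p))
    (hindep : μ.map (fun ω => (h ω, u ω, v ω, n 0 ω, n 1 ω)) =
      (μ.map h).prod ((μ.map u).prod ((μ.map v).prod ((μ.map (n 0)).prod (μ.map (n 1)))))) :
    IndepFun u v μ ∧ ∀ p, IndepFun h (n p) μ := by
  have hrest : Measurable fun ω => (u ω, v ω, n 0 ω, n 1 ω) := by fun_prop
  have hh_rest := indepFun_of_map_prod_eq_prod hhm hrest hindep
  refine ⟨(indepFun_of_map_prod_eq_prod hum (by fun_prop)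
    (map_eq_of_map_prod_eq_prod hhm hrest hindep)).comp measurable_id measurable_fst,
    Fin.forall_fin_two.2 ⟨hh_rest.comp measurable_id measurable_snd.snd.fst,
      hh_rest.comp measurable_id measurable_snd.snd.snd⟩⟩

lemma integral_probe_mul_star_probe {Ω : Type*} [MeasurableSpace Ω] {μ : Measure Ω} {N : ℕ}
    {h : Ω → ℂ} {u v : Ω → Fin N → ℂ} {φ : Fin 2 → Ω → ℝ} {n : Fin 2 → Ω → ℂ}
    (hhm : Measurable h) (hum : Measurable u) (hvm : Measurable v)
    (hφm : ∀ p, Measurable (φ p)) (hnm : ∀ p, Measurable (n p))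
    (hφrest : IndepFun (fun ω => (φ 0 ω, φ 1 ω)) (fun ω => (h ω, u ω, v ω, n 0 ω, n 1 ω)) μ)
    (hφmean : ∀ p, ∫ ω, exp (I * φ p ω) ∂μ = 0) (huv : IndepFun u v μ)
    (hhn : ∀ p, IndepFun h (n p) μ) (hhL2 : MemLp h 2 μ) (hnL2 : ∀ p, MemLp (n p) 2 μ)
    (huL2 : ∀ i, MemLp (fun ω => u ω i) 2 μ) (hvL2 : ∀ i, MemLp (fun ω => v ω i) 2 μ)
    (hhmean : ∫ ω, h ω ∂μ = 0) (p q : Fin 2) :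
    ∫ ω, (h ω + n p ω + exp (I * φ p ω) * (star (v ω) ⬝ᵥ u ω))
        * star (h ω + n q ω + exp (I * φ q ω) * (star (v ω) ⬝ᵥ u ω)) ∂μ
      = ∫ ω, h ω * star (h ω) ∂μ
        + (∫ ω, exp (I * φ p ω) * star (exp (I * φ q ω)) ∂μ)
          * (secondMoment μ v * secondMoment μ u).trace
        + ∫ ω, n p ω * star (n q ω) ∂μ := by
  set X := fun ω => (φ 0 ω, φ 1 ω)
  set W := fun ω => (h ω, u ω, v ω, n 0 ω, n 1 ω)
  have hX : Measurable[MeasurableSpace.comap X inferInstance] X := comap_measurable X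
  have hW : Measurable[MeasurableSpace.comap W inferInstance] W := comap_measurable W
  have hexp : Measurable fun x : ℝ => exp (I * x) := by fun_prop
  have he : ∀ p, Measurable[MeasurableSpace.comap X inferInstance] fun ω => exp (I * φ p ω) :=
    Fin.forall_fin_two.2 ⟨hexp.comp hX.fst, hexp.comp hX.snd⟩
  have ha : ∀ p, Measurable[MeasurableSpace.comap W inferInstance] fun ω => h ω + n p ω :=
    Fin.forall_fin_two.2 ⟨hW.fst.add hW.snd.snd.snd.fst, hW.fst.add hW.snd.snd.snd.snd⟩
  have hb : Measurable[MeasurableSpace.comap W inferInstance] fun ω => star (v ω) ⬝ᵥ u ω :=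
    (by fun_prop : Continuous fun x : (Fin N → ℂ) × (Fin N → ℂ) => star x.2 ⬝ᵥ x.1).measurable
      |>.comp (hW.snd.fst.prodMk hW.snd.snd.fst)
  rw [integral_add_mul_mul_star_add_mul ((hφm 0).prodMk (hφm 1)).comap_le
    (by fun_prop : Measurable W).comap_le ((IndepFun_iff_Indep _ _ _).1 hφrest) (he p) (he q)
    (fun ω => (norm_exp_I_mul_ofReal _).le) (fun ω => (norm_exp_I_mul_ofReal _).le) (hφmean p)
    (hφmean q) (ha p) (ha q) hb (hhL2.add (hnL2 p)) (hhL2.add (hnL2 q))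
    (huv.memLp_two_star_dotProduct huL2 hvL2),
    integral_add_mul_star_add_of_indepFun (hhn p) (hhn q) hhmean hhL2 (hnL2 p) (hnL2 q),
    huv.integral_star_dotProduct_mul_star huL2 hvL2]
  ring

theorem correlation_consecutive_probings_EPS_with_direct_general
    {Ω : Type*} [MeasurableSpace Ω] (μ : Measure Ω) [IsProbabilityMeasure μ]
    {N : ℕ}
    (h : Ω → ℂ) (u v : Ω → Fin N → ℂ)
    (φ : Fin 2 → Ω → ℝ)
    (n : Fin 2 → Ω → ℂ)
    (s : Fin 2 → Ω → ℂ)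
    (hs : ∀ p ω, s p ω = h ω
        + star (v ω) ⬝ᵥ
            ((Complex.exp (Complex.I * (φ p ω : ℂ)) •
              (1 : Matrix (Fin N) (Fin N) ℂ)).mulVec (u ω))
        + n p ω)
    -- measurability
    (hhm : Measurable h) (hum : Measurable u) (hvm : Measurable v)
    (hφm : ∀ p, Measurable (φ p)) (hnm : ∀ p, Measurable (n p))
    -- the two phases are independent and uniform on (-π, π)
    (hφindep : IndepFun (φ 0) (φ 1) μ)
    (hφunif : ∀ p, μ.map (φ p)
        = (ENNReal.ofReal (2 * π))⁻¹ • (volume.restrict (Set.Ioo (-π) π)))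
    -- the pair of phases is independent of (h, u, v, n₁, n₂)
    (hφrest : IndepFun (fun ω => (φ 0 ω, φ 1 ω))
        (fun ω => (h ω, u ω, v ω, n 0 ω, n 1 ω)) μ)
    -- (h, u, v, n₁, n₂) mutually independent: joint law = product of laws
    (hindep : μ.map (fun ω => (h ω, u ω, v ω, n 0 ω, n 1 ω)) =
        (μ.map h).prod ((μ.map u).prod ((μ.map v).prod
          ((μ.map (n 0)).prod (μ.map (n 1))))))
    -- square integrability
    (hhL2 : MemLp h 2 μ) (hnL2 : ∀ p, MemLp (n p) 2 μ)
    (huL2 : ∀ i, MemLp (fun ω => u ω i) 2 μ)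
    (hvL2 : ∀ i, MemLp (fun ω => v ω i) 2 μ)
    -- zero means
    (hhmean : ∫ ω, h ω ∂μ = 0)
    -- second moments
    (β σ2 : ℝ)
    (hβ : ∫ ω, h ω * star (h ω) ∂μ = (β : ℂ))
    (hσ : ∀ p, ∫ ω, n p ω * star (n p ω) ∂μ = (σ2 : ℂ))
    (hnuncorr : ∫ ω, n 0 ω * star (n 1 ω) ∂μ = 0)
    -- covariance matrices of the IRS channel vectors
    (Ru Rv : Matrix (Fin N) (Fin N) ℂ)
    (hRu : ∀ i j, Ru i j = ∫ ω, u ω i * star (u ω j) ∂μ)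
    (hRv : ∀ i j, Rv i j = ∫ ω, v ω i * star (v ω j) ∂μ) :
    -- cross-correlation
    (∫ ω, s 0 ω * star (s 1 ω) ∂μ = (β : ℂ)) ∧
    -- variance of each sample
    (∀ l : Fin 2, ∫ ω, s l ω * star (s l ω) ∂μ
        = (β : ℂ) + (Rv * Ru).trace + (σ2 : ℂ)) ∧
    -- correlation coefficient
    (∀ l : Fin 2,
      (∫ ω, s 0 ω * star (s 1 ω) ∂μ) / (∫ ω, s l ω * star (s l ω) ∂μ)
        = (β : ℂ) / ((β : ℂ) + (Rv * Ru).trace + (σ2 : ℂ))) := by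
  obtain rfl : Ru = secondMoment μ u := Matrix.ext hRu
  obtain rfl : Rv = secondMoment μ v := Matrix.ext hRv
  obtain ⟨huv, hhn⟩ := indepFun_of_map_eq_prod_prod hhm hum hvm hnm hindep
  have hφmean : ∀ p, ∫ ω, exp (I * φ p ω) ∂μ = 0 := fun p =>
    integral_exp_I_mul_of_map_eq_uniform (hφm p) (hφunif p)
  have hs' : ∀ p ω, s p ω = h ω + n p ω + exp (I * φ p ω) * (star (v ω) ⬝ᵥ u ω) := fun p ω => by
    rw [hs, smul_mulVec, one_mulVec, dotProduct_smul, smul_eq_mul]; ring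
  have hkey (p q : Fin 2) : ∫ ω, s p ω * star (s q ω) ∂μ
      = β + (∫ ω, exp (I * φ p ω) * star (exp (I * φ q ω)) ∂μ)
          * (secondMoment μ v * secondMoment μ u).trace + ∫ ω, n p ω * star (n q ω) ∂μ := by
    simp_rw [hs']
    rw [integral_probe_mul_star_probe hhm hum hvm hφm hnm hφrest hφmean huv hhn hhL2 hnL2 huL2
      hvL2 hhmean, hβ]
  have hexp : Measurable fun x : ℝ => exp (I * x) := by fun_prop
  have hcross : ∫ ω, exp (I * φ 0 ω) * star (exp (I * φ 1 ω)) ∂μ = 0 :=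
    (hφindep.comp hexp hexp).integral_mul_star_eq_zero (hexp.comp (hφm 0)).aemeasurable
      (hexp.comp (hφm 1)).aemeasurable (hφmean 0)
  have hvar : ∀ l : Fin 2, ∫ ω, s l ω * star (s l ω) ∂μ
      = β + (secondMoment μ v * secondMoment μ u).trace + σ2 := fun l => by
    rw [hkey, integral_mul_star_self_eq_one fun ω => norm_exp_I_mul_ofReal _, hσ, one_mul]
  refine ⟨by rw [hkey, hcross, hnuncorr]; ring, hvar, fun l => ?_⟩
  rw [hvar, hkey, hcross, hnuncorr]
  ring

/-- **Lemma 2** (correlation of consecutive probings under equal phase shifts,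
direct path present).  `Φ p ω = exp (I * φ p ω) • 1`, where `φ 0, φ 1` are
independent, uniform on `(-π, π)`, and independent of `(h, u, v, n₁, n₂)`. -/
theorem correlation_consecutive_probings_EPS_with_direct
    {Ω : Type*} [MeasurableSpace Ω] (μ : Measure Ω) [IsProbabilityMeasure μ]
    {N : ℕ} (hN : 1 ≤ N)
    (h : Ω → ℂ) (u v : Ω → Fin N → ℂ)
    (φ : Fin 2 → Ω → ℝ)
    (n : Fin 2 → Ω → ℂ)
    (s : Fin 2 → Ω → ℂ)
    (hs : ∀ p ω, s p ω = h ω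
        + star (v ω) ⬝ᵥ
            ((Complex.exp (Complex.I * (φ p ω : ℂ)) •
              (1 : Matrix (Fin N) (Fin N) ℂ)).mulVec (u ω))
        + n p ω)
    -- measurability
    (hhm : Measurable h) (hum : Measurable u) (hvm : Measurable v)
    (hφm : ∀ p, Measurable (φ p)) (hnm : ∀ p, Measurable (n p))
    -- the two phases are independent and uniform on (-π, π)
    (hφindep : IndepFun (φ 0) (φ 1) μ)
    (hφunif : ∀ p, μ.map (φ p)
        = (ENNReal.ofReal (2 * π))⁻¹ • (volume.restrict (Set.Ioo (-π) π)))
    -- the pair of phases is independent of (h, u, v, n₁, n₂)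
    (hφrest : IndepFun (fun ω => (φ 0 ω, φ 1 ω))
        (fun ω => (h ω, u ω, v ω, n 0 ω, n 1 ω)) μ)
    -- (h, u, v, n₁, n₂) mutually independent: joint law = product of laws
    (hindep : μ.map (fun ω => (h ω, u ω, v ω, n 0 ω, n 1 ω)) =
        (μ.map h).prod ((μ.map u).prod ((μ.map v).prod
          ((μ.map (n 0)).prod (μ.map (n 1))))))
    -- square integrability
    (hhL2 : MemLp h 2 μ) (hnL2 : ∀ p, MemLp (n p) 2 μ)
    (huL2 : ∀ i, MemLp (fun ω => u ω i) 2 μ)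
    (hvL2 : ∀ i, MemLp (fun ω => v ω i) 2 μ)
    -- zero means
    (hhmean : ∫ ω, h ω ∂μ = 0)
    (hnmean : ∀ p, ∫ ω, n p ω ∂μ = 0)
    (humean : ∀ i, ∫ ω, u ω i ∂μ = 0)
    (hvmean : ∀ i, ∫ ω, v ω i ∂μ = 0)
    -- second moments
    (β σ2 : ℝ)
    (hβ : ∫ ω, h ω * star (h ω) ∂μ = (β : ℂ))
    (hσ : ∀ p, ∫ ω, n p ω * star (n p ω) ∂μ = (σ2 : ℂ))
    (hnuncorr : ∫ ω, n 0 ω * star (n 1 ω) ∂μ = 0)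
    -- covariance matrices of the IRS channel vectors
    (Ru Rv : Matrix (Fin N) (Fin N) ℂ)
    (hRu : ∀ i j, Ru i j = ∫ ω, u ω i * star (u ω j) ∂μ)
    (hRv : ∀ i j, Rv i j = ∫ ω, v ω i * star (v ω j) ∂μ) :
    -- cross-correlation
    (∫ ω, s 0 ω * star (s 1 ω) ∂μ = (β : ℂ)) ∧
    -- variance of each sample
    (∀ l : Fin 2, ∫ ω, s l ω * star (s l ω) ∂μ
        = (β : ℂ) + (Rv * Ru).trace + (σ2 : ℂ)) ∧
    -- correlation coefficient
    (∀ l : Fin 2,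
      (∫ ω, s 0 ω * star (s 1 ω) ∂μ) / (∫ ω, s l ω * star (s l ω) ∂μ)
        = (β : ℂ) / ((β : ℂ) + (Rv * Ru).trace + (σ2 : ℂ))) :=
  correlation_consecutive_probings_EPS_with_direct_general μ h u v φ n s hs hhm hum hvm hφm hnm
    hφindep hφunif hφrest hindep hhL2 hnL2 huL2 hvL2 hhmean β σ2 hβ hσ hnuncorr Ru Rv hRu hRv
end

section
/- A uniform random phase times a complex Gaussian is complex Gaussian (Theorem 3). Let σ² ≥ 0. Let (Ω, μ) be a probability space and let Θ : Ω → ℝ and X : Ω → ℂ be independent random variables such that Θ is uniform on (−π, π) and the law of X is CN(0, σ²). Then the law of the random variable ω ↦ Complex.exp(I · Θ(ω)) · X(ω) is again CN(0, σ²). -/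
/-!
The characteristic function of `CN(0, v)` is `t ↦ exp (-v ‖t‖² / 4)`, which depends only on `‖t‖`,
so `CN(0, v)` is invariant under multiplication by any unimodular constant. Since the phase is
independent of `X`, the law of `exp (I Θ) X` is an average of such rotated copies of `CN(0, v)`.
-/

open MeasureTheory ProbabilityTheory Complex Real
open scoped ComplexConjugate

/-- The circularly symmetric complex Gaussian measure `CN(0, v)` on `ℂ`:
the pushforward of `gaussianReal 0 (v/2) ×ₘ gaussianReal 0 (v/2)` under
`(x, y) ↦ x + y * I`. -/
noncomputable def complexGaussian (v : ℝ) : Measure ℂ :=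
  ((gaussianReal 0 (v / 2).toNNReal).prod (gaussianReal 0 (v / 2).toNNReal)).map
    (fun p => (p.1 : ℂ) + (p.2 : ℂ) * Complex.I)

instance isProbabilityMeasure_complexGaussian (v : ℝ) :
    IsProbabilityMeasure (complexGaussian v) := by
  rw [complexGaussian]
  exact Measure.isProbabilityMeasure_map (by fun_prop)

lemma charFun_complexGaussian (v : ℝ) (t : ℂ) :
    charFun (complexGaussian v) t = cexp (-((v / 2).toNNReal : ℝ) * ‖t‖ ^ 2 / 2) := by
  have hinner (x y : ℝ) : inner ℝ ((x : ℂ) + y * I) t = t.re * x + t.im * y := by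
    simp [Complex.inner]
  rw [charFun_apply, complexGaussian, integral_map (by fun_prop) (by fun_prop)]
  simp_rw [hinner, ofReal_add, ofReal_mul, add_mul, Complex.exp_add]
  rw [integral_prod_mul (fun x : ℝ => cexp (t.re * x * I)) (fun y : ℝ => cexp (t.im * y * I)),
    ← charFun_apply_real, ← charFun_apply_real, charFun_gaussianReal, charFun_gaussianReal,
    ← Complex.exp_add, ← ofReal_pow ‖t‖, Complex.sq_norm, normSq_apply]
  push_cast
  ring_nf

lemma charFun_map_mul_left (μ : Measure ℂ) (c t : ℂ) :
    charFun (μ.map (c * ·)) t = charFun μ (conj c * t) := by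
  rw [charFun_apply, charFun_apply, integral_map (by fun_prop) (by fun_prop)]
  congr 1 with z
  simp only [Complex.inner, map_mul]
  ring_nf

lemma complexGaussian_map_mul_left (v : ℝ) {c : ℂ} (hc : ‖c‖ = 1) :
    (complexGaussian v).map (c * ·) = complexGaussian v := by
  have : IsProbabilityMeasure ((complexGaussian v).map (c * ·)) :=
    Measure.isProbabilityMeasure_map (by fun_prop)
  refine Measure.ext_of_charFun (funext fun t => ?_)
  rw [charFun_map_mul_left, charFun_complexGaussian, charFun_complexGaussian, norm_mul,
    Complex.norm_conj, hc, one_mul]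

lemma MeasureTheory.Measure.map_prod_uncurry_eq_right_of_forall_map_eq {α β : Type*}
    [MeasurableSpace α] [MeasurableSpace β] (μ : Measure α) [IsProbabilityMeasure μ]
    {ν : Measure β} [SFinite ν] {f : α → β → β} (hf : Measurable (Function.uncurry f))
    (h : ∀ a, ν.map (f a) = ν) :
    (μ.prod ν).map (Function.uncurry f) = ν := by
  ext s hs
  rw [Measure.map_apply hf hs, Measure.prod_apply (hf hs)]
  have hsection (a : α) : ν (Prod.mk a ⁻¹' (Function.uncurry f ⁻¹' s)) = ν s := by
    conv_rhs => rw [← h a]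
    exact (Measure.map_apply (hf.comp measurable_prodMk_left) hs).symm
  simp [hsection]

lemma ProbabilityTheory.IndepFun.map_eq_of_forall_map_eq {Ω α β : Type*} [MeasurableSpace Ω]
    [MeasurableSpace α] [MeasurableSpace β] {μ : Measure Ω} [IsProbabilityMeasure μ]
    {Y : Ω → α} {X : Ω → β} (hind : IndepFun Y X μ) (hY : AEMeasurable Y μ)
    (hX : AEMeasurable X μ) {f : α → β → β} (hf : Measurable (Function.uncurry f))
    (h : ∀ a, (μ.map X).map (f a) = μ.map X) :
    μ.map (fun ω => f (Y ω) (X ω)) = μ.map X := by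
  have := Measure.isProbabilityMeasure_map hY
  change μ.map (Function.uncurry f ∘ fun ω => (Y ω, X ω)) = _
  rw [← AEMeasurable.map_map_of_aemeasurable hf.aemeasurable (hY.prodMk hX),
    (indepFun_iff_map_prod_eq_prod_map_map hY hX).mp hind]
  exact Measure.map_prod_uncurry_eq_right_of_forall_map_eq _ hf h

theorem uniform_phase_mul_complexGaussian_general
    (v : ℝ)
    {Ω : Type*} [MeasurableSpace Ω] (μ : Measure Ω) [IsProbabilityMeasure μ]
    (Θ : Ω → ℝ) (X : Ω → ℂ)
    (hΘm : Measurable Θ) (hXm : Measurable X)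
    (hind : IndepFun Θ X μ)
    (hXlaw : μ.map X = complexGaussian v) :
    μ.map (fun ω => Complex.exp (Complex.I * (Θ ω : ℂ)) * X ω) = complexGaussian v := by
  rw [← hXlaw]
  refine hind.map_eq_of_forall_map_eq hΘm.aemeasurable hXm.aemeasurable
    (f := fun θ z => Complex.exp (Complex.I * (θ : ℂ)) * z) (by fun_prop) fun θ => ?_
  rw [hXlaw]
  exact complexGaussian_map_mul_left v (norm_exp_I_mul_ofReal θ)

/-- **Theorem 3**: a uniform random phase times an independent circularly
symmetric complex Gaussian is again complex Gaussian with the same variance. -/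
theorem uniform_phase_mul_complexGaussian
    (v : ℝ) (hv : 0 ≤ v)
    {Ω : Type*} [MeasurableSpace Ω] (μ : Measure Ω) [IsProbabilityMeasure μ]
    (Θ : Ω → ℝ) (X : Ω → ℂ)
    (hΘm : Measurable Θ) (hXm : Measurable X)
    (hind : IndepFun Θ X μ)
    (hΘlaw : μ.map Θ = (ENNReal.ofReal (2 * π))⁻¹ • (volume.restrict (Set.Ioo (-π) π)))
    (hXlaw : μ.map X = complexGaussian v) :
    μ.map (fun ω => Complex.exp (Complex.I * (Θ ω : ℂ)) * X ω) = complexGaussian v :=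
  uniform_phase_mul_complexGaussian_general v μ Θ X hΘm hXm hind hXlaw
end

section
/- Eavesdropper cross-correlation under random phase shifts (the identity η_{aebe} = ρ_ab √κ₁ √κ₂ κ_e · tr(R∘R)). Let N ≥ 1, let R : Matrix (Fin N) (Fin N) ℂ be positive semidefinite (Hermitian, so its diagonal entries are real), let κ₁, κ₂, κ_e ≥ 0 and ρ ∈ ℝ. On a probability space (Ω, μ), let g₁, g₂ : Ω → (Fin N → ℂ) be random vectors with square-integrable zero-mean entries satisfying E[g₁ n · conj(g₂ m)] = ρ if n = m and 0 otherwise; define h₁(ω) = √κ₁ • (R^{1/2}.mulVec (g₁ ω)) and h₂(ω) = √κ₂ • (R^{1/2}.mulVec (g₂ ω)). Let h_e : Ω → (Fin N → ℂ) be a random vector with square-integrable zero-mean entries and E[h_e n · conj(h_e m)] = κ_e · R n m. Let φ_n : Ω → ℝ, n ∈ Fin N, be real random variables, each uniform on (−π, π), and let Φ(ω) be the diagonal matrix with diagonal entries exp(I·φ_n(ω)). Assume the pair (g₁, g₂), the vector h_e, and the phases φ_n are all mutually independent. Then E[(star (h_e) ⬝ᵥ (Φ.mulVec h₁)) · conj(star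 (h_e) ⬝ᵥ (Φ.mulVec h₂))] = ρ · √κ₁ · √κ₂ · κ_e · Σ_{n ∈ Fin N} (R n n)², where Σ_{n} (R n n)² is the trace of the Hadamard product R ∘ R. -/
open MeasureTheory ProbabilityTheory Matrix Complex Real ComplexOrder

/-- The positive semidefinite square root of a positive semidefinite matrix, as defined in the
older Mathlib (`Matrix.PosSemidef.sqrt`, since removed). -/
noncomputable def Matrix.PosSemidef.sqrt {n 𝕜 : Type*} [Fintype n] [DecidableEq n] [RCLike 𝕜]
    {A : Matrix n n 𝕜} (hA : A.PosSemidef) : Matrix n n 𝕜 :=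
  hA.1.eigenvectorUnitary.1 * diagonal ((↑) ∘ Real.sqrt ∘ hA.1.eigenvalues) *
    (star hA.1.eigenvectorUnitary : Matrix n n 𝕜)

/-!
Expanding both inner products, the integrand is a double sum over `n, m` of products of a signal
factor `h₁ n · conj (h₂ m)`, an eavesdropper factor `h_e m · conj (h_e n)` and a phase factor
`e^{iφ_n} e^{-iφ_m}`. These are functions of the three independent components, so each term
factorises into three expectations: `√κ₁ √κ₂ ρ (R^{1/2} R^{1/2}ᴴ) n m = √κ₁ √κ₂ ρ R n m`,
`κ_e R m n`, and `δ_{nm}`, the last because for `n ≠ m` it splits into `E[e^{iφ_n}] E[e^{-iφ_m}]`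
and a uniform phase has `E[e^{iφ}] = 0`. Only the diagonal terms `ρ √κ₁ √κ₂ κ_e (R n n)²` survive.
-/

namespace Matrix

theorem PosSemidef.sqrt_mul_conjTranspose_sqrt {n 𝕜 : Type*} [Fintype n] [DecidableEq n]
    [RCLike 𝕜] {A : Matrix n n 𝕜} (hA : A.PosSemidef) : hA.sqrt * hA.sqrtᴴ = A := by
  set D : Matrix n n 𝕜 := diagonal ((↑) ∘ Real.sqrt ∘ hA.1.eigenvalues)
  have hS : hA.sqrt = Unitary.conjStarAlgAut 𝕜 _ hA.1.eigenvectorUnitary D := rfl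
  have hD : Dᴴ = D := isHermitian_diagonal_of_self_adjoint _ (by ext i; simp)
  have hDD : D * D = diagonal (RCLike.ofReal ∘ hA.1.eigenvalues) := by
    rw [diagonal_mul_diagonal]
    congr 1; ext i
    simp [← RCLike.ofReal_mul, Real.mul_self_sqrt (hA.eigenvalues_nonneg i)]
  conv_rhs => rw [hA.1.spectral_theorem, ← hDD, map_mul]
  rw [hS, ← star_eq_conjTranspose, ← map_star, star_eq_conjTranspose, hD]

theorem star_dotProduct_diagonal_mulVec_mul_star {n α : Type*} [Fintype n] [DecidableEq n]
    [CommSemiring α] [StarRing α] (w d u v : n → α) :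
    (star w ⬝ᵥ diagonal d *ᵥ u) * star (star w ⬝ᵥ diagonal d *ᵥ v) =
      ∑ i, ∑ j, (u i * star (v j)) * ((w j * star (w i)) * (d i * star (d j))) := by
  simp only [dotProduct, mulVec_diagonal, star_sum, Finset.sum_mul_sum, Pi.star_apply,
    star_mul', star_star]
  refine Finset.sum_congr rfl fun i _ => Finset.sum_congr rfl fun j _ => ?_
  ring

end Matrix

section SecondMoments

variable {Ω 𝕜 : Type*} [MeasurableSpace Ω] {μ : Measure Ω} [RCLike 𝕜]

theorem memLp_mulVec_apply {m n : Type*} [Fintype n] {p : ENNReal} (A : Matrix m n 𝕜)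
    {X : Ω → n → 𝕜} (hX : ∀ j, MemLp (fun ω => X ω j) p μ) (i : m) :
    MemLp (fun ω => (A *ᵥ X ω) i) p μ := by
  simp only [mulVec, dotProduct]
  exact memLp_finsetSum _ fun j _ => (hX j).const_mul _

theorem integrable_mul_star_of_memLp_two {f g : Ω → 𝕜} (hf : MemLp f 2 μ) (hg : MemLp g 2 μ) :
    Integrable (fun ω => f ω * star (g ω)) μ :=
  hf.integrable_mul hg.star

theorem integral_mulVec_mul_star_mulVec {l m n : Type*} [Fintype n] (A : Matrix l n 𝕜)
    (B : Matrix m n 𝕜) {X Y : Ω → n → 𝕜} (hX : ∀ j, MemLp (fun ω => X ω j) 2 μ)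
    (hY : ∀ j, MemLp (fun ω => Y ω j) 2 μ) (C : Matrix n n 𝕜)
    (hC : ∀ p q, ∫ ω, X ω p * star (Y ω q) ∂μ = C p q) (i : l) (k : m) :
    ∫ ω, (A *ᵥ X ω) i * star ((B *ᵥ Y ω) k) ∂μ = (A * C * Bᴴ) i k := by
  have hexpand : ∀ ω, (A *ᵥ X ω) i * star ((B *ᵥ Y ω) k) =
      ∑ p, ∑ q, A i p * star (B k q) * (X ω p * star (Y ω q)) := fun ω => by
    simp only [mulVec, dotProduct, star_sum, Finset.sum_mul_sum, star_mul']
    refine Finset.sum_congr rfl fun p _ => Finset.sum_congr rfl fun q _ => ?_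
    ring
  have hint : ∀ p q, Integrable (fun ω => A i p * star (B k q) * (X ω p * star (Y ω q))) μ :=
    fun p q => (integrable_mul_star_of_memLp_two (hX p) (hY q)).const_mul _
  simp_rw [hexpand]
  rw [integral_finsetSum _ fun p _ => integrable_finsetSum _ fun q _ => hint p q]
  simp_rw [integral_finsetSum _ fun q _ => hint _ q, integral_const_mul, hC, mul_apply,
    Finset.sum_mul, conjTranspose_apply]
  rw [Finset.sum_comm]
  refine Finset.sum_congr rfl fun q _ => Finset.sum_congr rfl fun p _ => ?_
  ring

end SecondMoments

section IndependentComponents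

variable {Ω α β γ 𝕜 : Type*} [MeasurableSpace Ω] [MeasurableSpace α] [MeasurableSpace β]
  [MeasurableSpace γ] [RCLike 𝕜] {μ : Measure Ω} {X : Ω → α} {Y : Ω → β} {Z : Ω → γ}

theorem integrable_mul_mul_of_map_eq_prod (hX : Measurable X) (hY : Measurable Y)
    (hZ : Measurable Z)
    (hXYZ : μ.map (fun ω => (X ω, Y ω, Z ω)) = (μ.map X).prod ((μ.map Y).prod (μ.map Z)))
    {f : α → 𝕜} {g : β → 𝕜} {k : γ → 𝕜} (hf : Measurable f) (hg : Measurable g)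
    (hk : Measurable k) (hfX : Integrable (fun ω => f (X ω)) μ)
    (hgY : Integrable (fun ω => g (Y ω)) μ) (hkZ : Integrable (fun ω => k (Z ω)) μ) :
    Integrable (fun ω => f (X ω) * (g (Y ω) * k (Z ω))) μ := by
  have hprod : Integrable (fun z : α × β × γ => f z.1 * (g z.2.1 * k z.2.2))
      (μ.map fun ω => (X ω, Y ω, Z ω)) := by
    rw [hXYZ]
    exact ((integrable_map_measure hf.aestronglyMeasurable hX.aemeasurable).mpr hfX).mul_prod
      (((integrable_map_measure hg.aestronglyMeasurable hY.aemeasurable).mpr hgY).mul_prod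
        ((integrable_map_measure hk.aestronglyMeasurable hZ.aemeasurable).mpr hkZ))
  exact (integrable_map_measure (by fun_prop) (by fun_prop)).mp hprod

theorem integral_mul_mul_of_map_eq_prod [IsFiniteMeasure μ] (hX : Measurable X)
    (hY : Measurable Y) (hZ : Measurable Z)
    (hXYZ : μ.map (fun ω => (X ω, Y ω, Z ω)) = (μ.map X).prod ((μ.map Y).prod (μ.map Z)))
    {f : α → 𝕜} {g : β → 𝕜} {k : γ → 𝕜} (hf : Measurable f) (hg : Measurable g)
    (hk : Measurable k) :
    ∫ ω, f (X ω) * (g (Y ω) * k (Z ω)) ∂μ =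
      (∫ ω, f (X ω) ∂μ) * ((∫ ω, g (Y ω) ∂μ) * ∫ ω, k (Z ω) ∂μ) := by
  calc ∫ ω, f (X ω) * (g (Y ω) * k (Z ω)) ∂μ
      = ∫ z, f z.1 * (g z.2.1 * k z.2.2) ∂(μ.map fun ω => (X ω, Y ω, Z ω)) :=
        (integral_map (hX.prodMk (hY.prodMk hZ)).aemeasurable
          ((hf.comp measurable_fst).mul ((hg.comp measurable_snd.fst).mul
            (hk.comp measurable_snd.snd))).aestronglyMeasurable).symm
    _ = _ := by
      rw [hXYZ]
      refine (integral_prod_mul (f := f) (g := fun y : β × γ => g y.1 * k y.2)).trans ?_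
      rw [integral_prod_mul, integral_map hX.aemeasurable hf.aestronglyMeasurable,
        integral_map hY.aemeasurable hg.aestronglyMeasurable,
        integral_map hZ.aemeasurable hk.aestronglyMeasurable]

theorem integral_star_dotProduct_diagonal_mulVec_mul_star_of_map_eq_prod [IsFiniteMeasure μ]
    {n : Type*} [Fintype n] [DecidableEq n] (hX : Measurable X) (hY : Measurable Y)
    (hZ : Measurable Z)
    (hXYZ : μ.map (fun ω => (X ω, Y ω, Z ω)) = (μ.map X).prod ((μ.map Y).prod (μ.map Z)))
    {u v : α → n → 𝕜} {w : β → n → 𝕜} {d : γ → n → 𝕜} (hu : Measurable u)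
    (hv : Measurable v) (hw : Measurable w) (hd : Measurable d)
    (huv : ∀ i j, Integrable (fun ω => u (X ω) i * star (v (X ω) j)) μ)
    (hww : ∀ i j, Integrable (fun ω => w (Y ω) j * star (w (Y ω) i)) μ)
    (hdd : ∀ i j, Integrable (fun ω => d (Z ω) i * star (d (Z ω) j)) μ) :
    ∫ ω, (star (w (Y ω)) ⬝ᵥ diagonal (d (Z ω)) *ᵥ u (X ω)) *
        star (star (w (Y ω)) ⬝ᵥ diagonal (d (Z ω)) *ᵥ v (X ω)) ∂μ =
      ∑ i, ∑ j, (∫ ω, u (X ω) i * star (v (X ω) j) ∂μ) *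
        ((∫ ω, w (Y ω) j * star (w (Y ω) i) ∂μ) * ∫ ω, d (Z ω) i * star (d (Z ω) j) ∂μ) := by
  have hint : ∀ i j, Integrable (fun ω => (u (X ω) i * star (v (X ω) j)) *
      ((w (Y ω) j * star (w (Y ω) i)) * (d (Z ω) i * star (d (Z ω) j)))) μ := fun i j =>
    integrable_mul_mul_of_map_eq_prod hX hY hZ hXYZ (f := fun a => u a i * star (v a j))
      (g := fun b => w b j * star (w b i)) (k := fun c => d c i * star (d c j))
      (by fun_prop) (by fun_prop) (by fun_prop) (huv i j) (hww i j) (hdd i j)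
  simp_rw [star_dotProduct_diagonal_mulVec_mul_star]
  rw [integral_finsetSum _ fun i _ => integrable_finsetSum _ fun j _ => hint i j]
  simp_rw [integral_finsetSum _ fun j _ => hint _ j]
  exact Finset.sum_congr rfl fun i _ => Finset.sum_congr rfl fun j _ =>
    integral_mul_mul_of_map_eq_prod hX hY hZ hXYZ (f := fun a => u a i * star (v a j))
      (g := fun b => w b j * star (w b i)) (k := fun c => d c i * star (d c j))
      (by fun_prop) (by fun_prop) (by fun_prop)

end IndependentComponents

section RandomPhases

variable {Ω : Type*} [MeasurableSpace Ω] {μ : Measure Ω}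

theorem integral_cexp_I_mul_uniform (c : ENNReal) :
    ∫ x : ℝ, cexp (I * x) ∂(c • volume.restrict (Set.Ioo (-π) π)) = 0 := by
  rw [integral_smul_measure, Measure.restrict_congr_set Ioo_ae_eq_Ioc,
    ← intervalIntegral.integral_of_le (by linarith [Real.pi_pos]),
    integral_exp_mul_complex I_ne_zero]
  push_cast
  rw [mul_neg, mul_comm I, Complex.exp_neg, exp_pi_mul_I]
  norm_num

theorem integral_cexp_I_mul_of_map_eq_uniform {θ : Ω → ℝ} (hθ : Measurable θ) {c : ENNReal}
    (hunif : μ.map θ = c • volume.restrict (Set.Ioo (-π) π)) :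
    ∫ ω, cexp (I * θ ω) ∂μ = 0 := by
  rw [← integral_cexp_I_mul_uniform c, ← hunif,
    integral_map hθ.aemeasurable (by fun_prop)]

theorem integral_cexp_mul_star_cexp_of_indepFun [IsProbabilityMeasure μ] {ι : Type*}
    [DecidableEq ι] {φ : ι → Ω → ℝ} (hφm : ∀ n, Measurable (φ n))
    (hindep : Pairwise fun n m => IndepFun (φ n) (φ m) μ)
    (hmean : ∀ n, ∫ ω, cexp (I * φ n ω) ∂μ = 0) (n m : ι) :
    ∫ ω, cexp (I * φ n ω) * star (cexp (I * φ m ω)) ∂μ = if n = m then 1 else 0 := by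
  by_cases hnm : n = m
  · subst hnm
    simp only [RCLike.star_def, RCLike.mul_conj, norm_exp_I_mul_ofReal]
    simp
  · rw [if_neg hnm, (hindep hnm).integral_fun_comp_mul_comp (f := fun x : ℝ => cexp (I * x))
      (g := fun x : ℝ => star (cexp (I * x))) (hφm n).aemeasurable (hφm m).aemeasurable
      (by fun_prop) (by fun_prop), hmean n, zero_mul]

end RandomPhases

theorem eavesdropper_crossCorrelation_RPS_general
    {Ω : Type*} [MeasurableSpace Ω] (μ : Measure Ω) [IsProbabilityMeasure μ]
    {N : ℕ}
    (R : Matrix (Fin N) (Fin N) ℂ) (hR : R.PosSemidef)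
    (κ₁ κ₂ κe ρ : ℝ)
    (g₁ g₂ he : Ω → Fin N → ℂ)
    (φ : Fin N → Ω → ℝ)
    (h₁ h₂ : Ω → Fin N → ℂ)
    (hh₁ : ∀ ω, h₁ ω = (Real.sqrt κ₁ : ℂ) • (hR.sqrt.mulVec (g₁ ω)))
    (hh₂ : ∀ ω, h₂ ω = (Real.sqrt κ₂ : ℂ) • (hR.sqrt.mulVec (g₂ ω)))
    -- measurability
    (hg₁m : Measurable g₁) (hg₂m : Measurable g₂) (hhem : Measurable he)
    (hφm : ∀ n, Measurable (φ n))
    -- square integrability and zero means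
    (hg₁L2 : ∀ i, MemLp (fun ω => g₁ ω i) 2 μ)
    (hg₂L2 : ∀ i, MemLp (fun ω => g₂ ω i) 2 μ)
    (hheL2 : ∀ i, MemLp (fun ω => he ω i) 2 μ)
    -- cross covariance of g₁ and g₂, and covariance of h_e
    (hgcov : ∀ i j, ∫ ω, g₁ ω i * star (g₂ ω j) ∂μ = if i = j then (ρ : ℂ) else 0)
    (hhecov : ∀ i j, ∫ ω, he ω i * star (he ω j) ∂μ = (κe : ℂ) * R i j)
    -- the phases are mutually independent and uniform on (-π, π)
    (hφindep : iIndepFun φ μ)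
    (hφunif : ∀ n, μ.map (φ n)
        = (ENNReal.ofReal (2 * π))⁻¹ • (volume.restrict (Set.Ioo (-π) π)))
    -- the pair (g₁, g₂), the vector h_e and the phase family are mutually
    -- independent: joint law = product of laws
    (hindep : μ.map (fun ω => ((g₁ ω, g₂ ω), he ω, fun n : Fin N => φ n ω)) =
        (μ.map (fun ω => (g₁ ω, g₂ ω))).prod
          ((μ.map he).prod (μ.map (fun ω (n : Fin N) => φ n ω)))) :
    ∫ ω, (star (he ω) ⬝ᵥ
            ((Matrix.diagonal fun n => Complex.exp (Complex.I * (φ n ω : ℂ))).mulVec (h₁ ω)))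
          * star (star (he ω) ⬝ᵥ
            ((Matrix.diagonal fun n => Complex.exp (Complex.I * (φ n ω : ℂ))).mulVec (h₂ ω))) ∂μ
      = ((ρ * Real.sqrt κ₁ * Real.sqrt κ₂ * κe : ℝ) : ℂ) * ∑ n, (R n n) ^ 2 := by
  set A : Matrix (Fin N) (Fin N) ℂ := (Real.sqrt κ₁ : ℂ) • hR.sqrt with hA
  set B : Matrix (Fin N) (Fin N) ℂ := (Real.sqrt κ₂ : ℂ) • hR.sqrt with hB
  obtain rfl : h₁ = fun ω => A *ᵥ g₁ ω := funext fun ω => by rw [hh₁, smul_mulVec]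
  obtain rfl : h₂ = fun ω => B *ᵥ g₂ ω := funext fun ω => by rw [hh₂, smul_mulVec]
  have hsignal : ∀ n m, ∫ ω, (A *ᵥ g₁ ω) n * star ((B *ᵥ g₂ ω) m) ∂μ =
      (Real.sqrt κ₁ * Real.sqrt κ₂ * ρ : ℝ) * R n m := fun n m => by
    rw [integral_mulVec_mul_star_mulVec A B hg₁L2 hg₂L2 ((ρ : ℂ) • 1)
      (by simpa only [Matrix.smul_apply, one_apply, smul_eq_mul, mul_ite, mul_one, mul_zero]
        using hgcov), hA, hB]
    simp only [conjTranspose_smul, Matrix.mul_smul, Matrix.smul_mul, Matrix.mul_one,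
      hR.sqrt_mul_conjTranspose_sqrt, Matrix.smul_apply, smul_eq_mul, RCLike.star_def,
      conj_ofReal]
    push_cast
    ring
  have hphase := integral_cexp_mul_star_cexp_of_indepFun hφm
    (fun n m hnm => hφindep.indepFun hnm)
    fun n => integral_cexp_I_mul_of_map_eq_uniform (hφm n) (hφunif n)
  -- `(e :)` drops the expected type: unifying the goal with `u (X ω)` before `X` is known times out
  refine (integral_star_dotProduct_diagonal_mulVec_mul_star_of_map_eq_prod
    (hg₁m.prodMk hg₂m) hhem (measurable_pi_lambda _ hφm) hindep
    (u := fun p => A *ᵥ p.1) (v := fun p => B *ᵥ p.2) (w := fun x => x)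
    (d := fun t n => cexp (I * t n)) (by fun_prop) (by fun_prop) measurable_id (by fun_prop)
    (fun n m => integrable_mul_star_of_memLp_two (memLp_mulVec_apply A hg₁L2 n)
      (memLp_mulVec_apply B hg₂L2 m))
    (fun n m => integrable_mul_star_of_memLp_two (hheL2 m) (hheL2 n))
    (fun n m => Integrable.of_bound (by fun_prop) 1 (ae_of_all _ fun ω => by
      simp only [norm_mul, norm_star, norm_exp_I_mul_ofReal, mul_one, le_refl])) :).trans ?_
  simp only [hsignal, hhecov, hphase, mul_ite, mul_one, mul_zero, Finset.sum_ite_eq,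
    Finset.mem_univ, if_true, Finset.mul_sum]
  refine Finset.sum_congr rfl fun n _ => ?_
  push_cast
  ring

/-- **Eavesdropper cross-correlation under random phase shifts**: the identity
`η_{aebe} = ρ_ab √κ₁ √κ₂ κ_e · tr (R ∘ R)`, where the Hadamard trace is
`∑ n, (R n n)²`. -/
theorem eavesdropper_crossCorrelation_RPS
    {Ω : Type*} [MeasurableSpace Ω] (μ : Measure Ω) [IsProbabilityMeasure μ]
    {N : ℕ} (hN : 1 ≤ N)
    (R : Matrix (Fin N) (Fin N) ℂ) (hR : R.PosSemidef)
    (κ₁ κ₂ κe ρ : ℝ) (hκ₁ : 0 ≤ κ₁) (hκ₂ : 0 ≤ κ₂) (hκe : 0 ≤ κe)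
    (g₁ g₂ he : Ω → Fin N → ℂ)
    (φ : Fin N → Ω → ℝ)
    (h₁ h₂ : Ω → Fin N → ℂ)
    (hh₁ : ∀ ω, h₁ ω = (Real.sqrt κ₁ : ℂ) • (hR.sqrt.mulVec (g₁ ω)))
    (hh₂ : ∀ ω, h₂ ω = (Real.sqrt κ₂ : ℂ) • (hR.sqrt.mulVec (g₂ ω)))
    -- measurability
    (hg₁m : Measurable g₁) (hg₂m : Measurable g₂) (hhem : Measurable he)
    (hφm : ∀ n, Measurable (φ n))
    -- square integrability and zero means
    (hg₁L2 : ∀ i, MemLp (fun ω => g₁ ω i) 2 μ)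
    (hg₂L2 : ∀ i, MemLp (fun ω => g₂ ω i) 2 μ)
    (hheL2 : ∀ i, MemLp (fun ω => he ω i) 2 μ)
    (hg₁mean : ∀ i, ∫ ω, g₁ ω i ∂μ = 0)
    (hg₂mean : ∀ i, ∫ ω, g₂ ω i ∂μ = 0)
    (hhemean : ∀ i, ∫ ω, he ω i ∂μ = 0)
    -- cross covariance of g₁ and g₂, and covariance of h_e
    (hgcov : ∀ i j, ∫ ω, g₁ ω i * star (g₂ ω j) ∂μ = if i = j then (ρ : ℂ) else 0)
    (hhecov : ∀ i j, ∫ ω, he ω i * star (he ω j) ∂μ = (κe : ℂ) * R i j)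
    -- the phases are mutually independent and uniform on (-π, π)
    (hφindep : iIndepFun φ μ)
    (hφunif : ∀ n, μ.map (φ n)
        = (ENNReal.ofReal (2 * π))⁻¹ • (volume.restrict (Set.Ioo (-π) π)))
    -- the pair (g₁, g₂), the vector h_e and the phase family are mutually
    -- independent: joint law = product of laws
    (hindep : μ.map (fun ω => ((g₁ ω, g₂ ω), he ω, fun n : Fin N => φ n ω)) =
        (μ.map (fun ω => (g₁ ω, g₂ ω))).prod
          ((μ.map he).prod (μ.map (fun ω (n : Fin N) => φ n ω)))) :
    ∫ ω, (star (he ω) ⬝ᵥ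
            ((Matrix.diagonal fun n => Complex.exp (Complex.I * (φ n ω : ℂ))).mulVec (h₁ ω)))
          * star (star (he ω) ⬝ᵥ
            ((Matrix.diagonal fun n => Complex.exp (Complex.I * (φ n ω : ℂ))).mulVec (h₂ ω))) ∂μ
      = ((ρ * Real.sqrt κ₁ * Real.sqrt κ₂ * κe : ℝ) : ℂ) * ∑ n, (R n n) ^ 2 :=
  eavesdropper_crossCorrelation_RPS_general μ R hR κ₁ κ₂ κe ρ g₁ g₂ he φ h₁ h₂ hh₁ hh₂ hg₁m hg₂m
    hhem hφm hg₁L2 hg₂L2 hheL2 hgcov hhecov hφindep hφunif hindep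
end
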